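/- arXiv:2504.05205 — 11 statements merged into one kernel-verified Lean document; each statement's English description precedes it below -/
import Mathlib

section
/- Let a, b be nonzero complex numbers and let f be holomorphic on ℂ* = ℂ \ {0}. Define L_{a,b} f (z) = z² f''(z) + (2z - a) f'(z) + b² z² f(z) and U_± f (z) = z^{-1} e^{∓ i b z - a/(2z)} f(± i a/(2 b z)). Then L_{a,b}(U_± f) = U_±(L_{a,b} f) as functions on ℂ*. -/
open Complex

set_option maxHeartbeats 2000000 in
lemma alg (a b u z E X Y Z : ℂ) (hz : z ≠ 0) (hb : b ≠ 0) (hu2 : u ^ 2 = -1) :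
    z ^ 2 *
          (E * (-(u * b) - a / 2 * -(z ^ 2)⁻¹) *
              ((-z⁻¹ ^ 2 - u * b * z⁻¹ + a / 2 * z⁻¹ ^ 3) * X + -(u * a / (2 * b) * z⁻¹ ^ 3) * Y) +
            E *
              ((-(2 * z⁻¹ ^ 1 * -(z ^ 2)⁻¹) - u * b * -(z ^ 2)⁻¹ + a / 2 * (3 * z⁻¹ ^ 2 * -(z ^ 2)⁻¹)) * X +
                  (-z⁻¹ ^ 2 - u * b * z⁻¹ + a / 2 * z⁻¹ ^ 3) * (Y * (u * a / (2 * b) * -(z ^ 2)⁻¹)) +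
                (-(u * a / (2 * b) * (3 * z⁻¹ ^ 2 * -(z ^ 2)⁻¹)) * Y +
                  -(u * a / (2 * b) * z⁻¹ ^ 3) * (Z * (u * a / (2 * b) * -(z ^ 2)⁻¹))))) +
        (2 * z - a) * (E * ((-z⁻¹ ^ 2 - u * b * z⁻¹ + a / 2 * z⁻¹ ^ 3) * X + -(u * a / (2 * b) * z⁻¹ ^ 3) * Y)) +
      b ^ 2 * z ^ 2 * (z⁻¹ * E * X) =
    z⁻¹ * E *
      ((u * a / (2 * b) * z⁻¹) ^ 2 * Z + (2 * (u * a / (2 * b) * z⁻¹) - a) * Y +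
        b ^ 2 * (u * a / (2 * b) * z⁻¹) ^ 2 * X) := by
  have hv : z * z⁻¹ = 1 := mul_inv_cancel₀ hz
  have hw : b * b⁻¹ = 1 := mul_inv_cancel₀ hb
  linear_combination ((-1:ℂ)*z⁻¹*b*u*a*E*X + (1:ℂ)*z⁻¹*b*b⁻¹*u^2*a*E*Y + (-1:ℂ)*z⁻¹^2*a*E*X + (1:ℂ)*z⁻¹^2*b⁻¹*u*a*E*Y + ((1:ℂ)/4)*z⁻¹^3*a^2*E*X + ((-1:ℂ)/2)*z⁻¹^3*b⁻¹*u*a^2*E*Y + ((1:ℂ)/4)*z⁻¹^3*b⁻¹^2*u^2*a^2*E*Z + (1:ℂ)*z*b^2*E*X + (1:ℂ)*z*b^2*u^2*E*X + (2:ℂ)*z*z⁻¹*b*u*E*X + (2:ℂ)*z*z⁻¹^2*E*X + (-1:ℂ)*z*z⁻¹^2*b*u*a*E*X + (1:ℂ)*z*z⁻¹^2*b*b⁻¹*u^2*a*E*Y + (-2:ℂ)*z*z⁻¹^3*a*E*X + (2:ℂ)*z*z⁻¹^3*b⁻¹*u*a*E*Y + ((1:ℂ)/4)*z*z⁻¹^4*a^2*E*X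 + ((-1:ℂ)/2)*z*z⁻¹^4*b⁻¹*u*a^2*E*Y + ((1:ℂ)/4)*z*z⁻¹^4*b⁻¹^2*u^2*a^2*E*Z) * hv + ((1:ℂ)*z⁻¹*u^2*a*E*Y + ((-1:ℂ)/4)*z⁻¹^3*u^2*a^2*E*X + ((-1:ℂ)/4)*z⁻¹^3*b*b⁻¹*u^2*a^2*E*X) * hw + ((1:ℂ)*z⁻¹*a*E*Y + ((-1:ℂ)/4)*z⁻¹^3*a^2*E*X + (1:ℂ)*z*b^2*E*X) * hu2

set_option maxHeartbeats 2000000 in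
/-- The operators `U_± f (z) = z⁻¹ e^{∓ibz - a/(2z)} f(± ia/(2bz))` commute with
`L_{a,b} f (z) = z² f''(z) + (2z - a) f'(z) + b² z² f(z)` on `ℂ*`.
The sign `ε = ±1` selects `U_+` or `U_-`. -/
theorem stmt2 (a b : ℂ) (ha : a ≠ 0) (hb : b ≠ 0) (f : ℂ → ℂ)
    (hf : DifferentiableOn ℂ f {0}ᶜ) (ε : ℂ) (hε : ε = 1 ∨ ε = -1)
    (L U : (ℂ → ℂ) → (ℂ → ℂ))
    (hL : ∀ (g : ℂ → ℂ) (z : ℂ),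
      L g z = z ^ 2 * deriv (deriv g) z + (2 * z - a) * deriv g z + b ^ 2 * z ^ 2 * g z)
    (hU : ∀ (g : ℂ → ℂ) (z : ℂ),
      U g z = z⁻¹ * Complex.exp (-(ε * Complex.I * b * z) - a / (2 * z)) *
        g (ε * Complex.I * a / (2 * b * z))) :
    ∀ z : ℂ, z ≠ 0 → L (U f) z = U (L f) z := by
  set u : ℂ := ε * Complex.I with hu_def
  have hu2 : u ^ 2 = -1 := by
    rcases hε with h | h <;> simp [hu_def, h, mul_pow, Complex.I_sq]
  have hune : u ≠ 0 := by
    intro h; rw [h] at hu2; simp at hu2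
  set c : ℂ := u * a / (2 * b) with hc_def
  have hcne : c ≠ 0 := div_ne_zero (mul_ne_zero hune ha) (mul_ne_zero two_ne_zero hb)
  have hop : IsOpen ({0}ᶜ : Set ℂ) := isOpen_compl_singleton
  have hfa : AnalyticOnNhd ℂ f {0}ᶜ := hf.analyticOnNhd hop
  have hfa' : AnalyticOnNhd ℂ (deriv f) {0}ᶜ := hfa.deriv
  set φ : ℂ → ℂ := fun y => -(u * b * y) - a / 2 * y⁻¹ with hφ_def
  set F : ℂ → ℂ := fun y => y⁻¹ * Complex.exp (φ y) * f (c * y⁻¹) with hF_def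
  have hUfF : U f = F := by
    funext y
    rw [hU]
    have e1 : -(u * b * y) - a / (2 * y) = φ y := by
      simp only [hφ_def]; ring
    have e2 : u * a / (2 * b * y) = c * y⁻¹ := by
      simp only [hc_def]; ring
    rw [e1, e2, hF_def]
  set D1 : ℂ → ℂ := fun y => Complex.exp (φ y) *
      ((-(y⁻¹ ^ 2) - u * b * y⁻¹ + a / 2 * y⁻¹ ^ 3) * f (c * y⁻¹)
        + (-(c * y⁻¹ ^ 3)) * deriv f (c * y⁻¹)) with hD1_def
  -- basic derivative facts at a point y ≠ 0
  have hEder : ∀ y : ℂ, y ≠ 0 →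
      HasDerivAt (fun y => Complex.exp (φ y))
        (Complex.exp (φ y) * (-(u * b) - a / 2 * -(y ^ 2)⁻¹)) y := by
    intro y hy
    have hI : HasDerivAt (fun y : ℂ => y⁻¹) (-(y ^ 2)⁻¹) y := hasDerivAt_inv hy
    have hlin : HasDerivAt (fun y : ℂ => u * b * y) (u * b) y := by
      simpa using (hasDerivAt_id y).const_mul (u * b)
    have hφd : HasDerivAt φ (-(u * b) - a / 2 * -(y ^ 2)⁻¹) y := by
      exact hlin.neg.sub (hI.const_mul (a / 2))
    exact hφd.cexp
  have hXder : ∀ y : ℂ, y ≠ 0 →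
      HasDerivAt (fun y : ℂ => f (c * y⁻¹)) (deriv f (c * y⁻¹) * (c * -(y ^ 2)⁻¹)) y := by
    intro y hy
    have hI : HasDerivAt (fun y : ℂ => y⁻¹) (-(y ^ 2)⁻¹) y := hasDerivAt_inv hy
    have hwne : c * y⁻¹ ∈ ({0}ᶜ : Set ℂ) := by
      simp [mul_ne_zero hcne (inv_ne_zero hy)]
    have hfd : DifferentiableAt ℂ f (c * y⁻¹) := (hfa _ hwne).differentiableAt
    exact hfd.hasDerivAt.comp y (hI.const_mul c)
  have hYder : ∀ y : ℂ, y ≠ 0 →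
      HasDerivAt (fun y : ℂ => deriv f (c * y⁻¹))
        (deriv (deriv f) (c * y⁻¹) * (c * -(y ^ 2)⁻¹)) y := by
    intro y hy
    have hI : HasDerivAt (fun y : ℂ => y⁻¹) (-(y ^ 2)⁻¹) y := hasDerivAt_inv hy
    have hwne : c * y⁻¹ ∈ ({0}ᶜ : Set ℂ) := by
      simp [mul_ne_zero hcne (inv_ne_zero hy)]
    have hfd : DifferentiableAt ℂ (deriv f) (c * y⁻¹) := (hfa' _ hwne).differentiableAt
    exact hfd.hasDerivAt.comp y (hI.const_mul c)
  have key1 : ∀ y : ℂ, y ≠ 0 → HasDerivAt (U f) (D1 y) y := by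
    intro y hy
    rw [hUfF, hF_def, hD1_def]
    have hI : HasDerivAt (fun y : ℂ => y⁻¹) (-(y ^ 2)⁻¹) y := hasDerivAt_inv hy
    have h := (hI.mul (hEder y hy)).mul (hXder y hy)
    refine h.congr_deriv ?_
    simp only [Pi.mul_apply]
    ring
  have hd1 : ∀ y : ℂ, y ≠ 0 → deriv (U f) y = D1 y := fun y hy => (key1 y hy).deriv
  intro z hz
  -- second derivative
  have hI : HasDerivAt (fun y : ℂ => y⁻¹) (-(z ^ 2)⁻¹) z := hasDerivAt_inv hz
  have hR1 : HasDerivAt (fun y : ℂ => -(y⁻¹ ^ 2) - u * b * y⁻¹ + a / 2 * y⁻¹ ^ 3)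
      (-((2 : ℕ) * z⁻¹ ^ 1 * -(z ^ 2)⁻¹) - u * b * -(z ^ 2)⁻¹
        + a / 2 * ((3 : ℕ) * z⁻¹ ^ 2 * -(z ^ 2)⁻¹)) z :=
    ((hI.pow 2).neg.sub (hI.const_mul (u * b))).add ((hI.pow 3).const_mul (a / 2))
  have hR2 : HasDerivAt (fun y : ℂ => -(c * y⁻¹ ^ 3))
      (-(c * ((3 : ℕ) * z⁻¹ ^ 2 * -(z ^ 2)⁻¹))) z := ((hI.pow 3).const_mul c).neg
  have hD1der : HasDerivAt D1
      (Complex.exp (φ z) * (-(u * b) - a / 2 * -(z ^ 2)⁻¹) *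
        ((-(z⁻¹ ^ 2) - u * b * z⁻¹ + a / 2 * z⁻¹ ^ 3) * f (c * z⁻¹)
          + (-(c * z⁻¹ ^ 3)) * deriv f (c * z⁻¹))
       + Complex.exp (φ z) *
        ((-((2 : ℕ) * z⁻¹ ^ 1 * -(z ^ 2)⁻¹) - u * b * -(z ^ 2)⁻¹
            + a / 2 * ((3 : ℕ) * z⁻¹ ^ 2 * -(z ^ 2)⁻¹)) * f (c * z⁻¹)
          + (-(z⁻¹ ^ 2) - u * b * z⁻¹ + a / 2 * z⁻¹ ^ 3) *
              (deriv f (c * z⁻¹) * (c * -(z ^ 2)⁻¹))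
          + ((-(c * ((3 : ℕ) * z⁻¹ ^ 2 * -(z ^ 2)⁻¹))) * deriv f (c * z⁻¹)
          + (-(c * z⁻¹ ^ 3)) * (deriv (deriv f) (c * z⁻¹) * (c * -(z ^ 2)⁻¹))))) z := by
    rw [hD1_def]
    exact (hEder z hz).mul (((hR1.mul (hXder z hz)).add (hR2.mul (hYder z hz))))
  have hd2 : deriv (deriv (U f)) z = deriv D1 z := by
    apply Filter.EventuallyEq.deriv_eq
    filter_upwards [hop.mem_nhds (by simpa using hz)] with y hy
    exact hd1 y (by simpa using hy)
  rw [hU (L f), hL f, hL (U f), hd2, hD1der.deriv, hd1 z hz, hUfF]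
  simp only [hD1_def, hF_def]
  have e1 : -(u * b * z) - a / (2 * z) = φ z := by
    simp only [hφ_def]; ring
  have e2 : u * a / (2 * b * z) = c * z⁻¹ := by
    simp only [hc_def]; ring
  rw [e1, e2]
  push_cast
  generalize f (c * z⁻¹) = X
  generalize deriv f (c * z⁻¹) = Y
  generalize deriv (deriv f) (c * z⁻¹) = Z
  generalize Complex.exp (φ z) = E
  simp only [hc_def]
  exact alg a b u z E X Y Z hz hb hu2
end

section
/- Let a, b be nonzero complex numbers and let f be an entire function, not identically zero, satisfying z e^{a/(2z)} f(z) = κ₊ e^{-i b z} f(i a/(2 b z)) + κ₋ e^{i b z} f(- i a/(2 b z)) for all z ∈ ℂ* and some complex constants κ₊, κ₋. Then κ₊² - κ₋² = i a/(2b). -/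
open Complex

/-- If a nonzero entire `f` satisfies
`z e^{a/(2z)} f(z) = κ₊ e^{-ibz} f(ia/(2bz)) + κ₋ e^{ibz} f(-ia/(2bz))` on `ℂ*`,
then `κ₊² - κ₋² = ia/(2b)`. -/
theorem stmt3 (a b : ℂ) (ha : a ≠ 0) (hb : b ≠ 0) (f : ℂ → ℂ)
    (hf : Differentiable ℂ f) (hne : ∃ z, f z ≠ 0) (κp κm : ℂ)
    (hfe : ∀ z : ℂ, z ≠ 0 →
      z * Complex.exp (a / (2 * z)) * f z =
        κp * Complex.exp (-(Complex.I * b * z)) * f (Complex.I * a / (2 * b * z)) +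
          κm * Complex.exp (Complex.I * b * z) * f (-(Complex.I * a / (2 * b * z)))) :
    κp ^ 2 - κm ^ 2 = Complex.I * a / (2 * b) := by
  -- Find a nonzero point where `f` is nonzero (using continuity of `f` if only `f 0 ≠ 0`).
  obtain ⟨z₀, hz₀, hfz₀⟩ : ∃ z : ℂ, z ≠ 0 ∧ f z ≠ 0 := by
    obtain ⟨z, hz⟩ := hne
    rcases eq_or_ne z 0 with rfl | h
    · have h1 : ∀ᶠ w in nhdsWithin (0 : ℂ) {(0:ℂ)}ᶜ, f w ≠ 0 :=
        nhdsWithin_le_nhds ((hf.continuous.continuousAt).eventually_ne hz)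
      have h2 : ∀ᶠ w in nhdsWithin (0 : ℂ) {(0:ℂ)}ᶜ, w ∈ ({(0:ℂ)}ᶜ : Set ℂ) :=
        eventually_mem_nhdsWithin
      obtain ⟨w, hw1, hw2⟩ := (h1.and h2).exists
      exact ⟨w, hw2, hw1⟩
    · exact ⟨z, h, hz⟩
  have hI : Complex.I ≠ 0 := I_ne_zero
  set w₁ : ℂ := Complex.I * a / (2 * b * z₀) with hw₁def
  have hden : (2 : ℂ) * b * z₀ ≠ 0 := mul_ne_zero (mul_ne_zero two_ne_zero hb) hz₀
  have hw₁ : w₁ ≠ 0 := div_ne_zero (mul_ne_zero hI ha) hden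
  -- instantiate the functional equation at `z₀`, `w₁` and `-w₁`
  have hC := hfe z₀ hz₀
  have hA := hfe w₁ hw₁
  have hB := hfe (-w₁) (neg_ne_zero.mpr hw₁)
  -- simplify the arguments appearing in `hA` and `hB`
  have e1 : a / (2 * w₁) = -(Complex.I * b * z₀) := by
    rw [hw₁def]; field_simp; ring_nf; rw [Complex.I_sq]; ring
  have e2 : Complex.I * b * w₁ = -(a / (2 * z₀)) := by
    rw [hw₁def]; field_simp; ring_nf; rw [Complex.I_sq]
  have e3 : Complex.I * a / (2 * b * w₁) = z₀ := by
    rw [hw₁def]; field_simp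
  have e1' : a / (2 * -w₁) = Complex.I * b * z₀ := by
    rw [mul_neg, div_neg, e1, neg_neg]
  have e2' : Complex.I * b * -w₁ = a / (2 * z₀) := by
    rw [mul_neg, e2, neg_neg]
  have e3' : Complex.I * a / (2 * b * -w₁) = -z₀ := by
    rw [mul_neg, div_neg, e3]
  rw [e1, e2, neg_neg, e3] at hA
  rw [e1', e2', e3', neg_neg] at hB
  rw [← hw₁def] at hC
  -- combine the three equations
  have key : (w₁ * z₀) * (Complex.exp (a / (2 * z₀)) * f z₀) =
      (κp ^ 2 - κm ^ 2) * (Complex.exp (a / (2 * z₀)) * f z₀) := by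
    linear_combination w₁ * hC + κp * hA - κm * hB
  have h4 : w₁ * z₀ = κp ^ 2 - κm ^ 2 :=
    mul_right_cancel₀ (mul_ne_zero (Complex.exp_ne_zero _) hfz₀) key
  rw [← h4, hw₁def]
  field_simp
end

section
/- Let b > 0 be real, a a nonzero complex number, and suppose f is an entire function, not identically zero, such that e^{i b z} f(z) = κ z^{-1} e^{-a/(2z)} f(i a/(2 b z)) for all z ∈ ℂ* and some constant κ. Then f is identically zero (a contradiction); i.e., no such nonzero entire f exists. -/
open Complex Filter Topology

/-- Liouville-type step: there is no nonzero entire `f` with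
`e^{ibz} f(z) = κ z⁻¹ e^{-a/(2z)} f(ia/(2bz))` on `ℂ*`, for `b > 0` real and `a ≠ 0`. -/
theorem stmt4 (b : ℝ) (hb : 0 < b) (a : ℂ) (ha : a ≠ 0) (f : ℂ → ℂ)
    (hf : Differentiable ℂ f) (hne : ∃ z, f z ≠ 0) (κ : ℂ)
    (hfe : ∀ z : ℂ, z ≠ 0 →
      Complex.exp (Complex.I * b * z) * f z =
        κ * z⁻¹ * Complex.exp (-a / (2 * z)) * f (Complex.I * a / (2 * b * z))) :
    False := by
  set g : ℂ → ℂ := fun z => Complex.exp (Complex.I * b * z) * f z with hg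
  have hgd : Differentiable ℂ g := (Complex.differentiable_exp.comp (by fun_prop)).mul hf
  have hinv : Tendsto (fun z : ℂ => z⁻¹) (cocompact ℂ) (𝓝 0) := by
    rw [← Metric.cobounded_eq_cocompact]; exact tendsto_inv₀_cobounded
  have htend : Tendsto g (cocompact ℂ) (𝓝 0) := by
    have h1 : Tendsto (fun z : ℂ => κ * z⁻¹) (cocompact ℂ) (𝓝 0) := by
      simpa using hinv.const_mul κ
    have h2 : Tendsto (fun z : ℂ => Complex.exp (-a / (2 * z))) (cocompact ℂ) (𝓝 1) := by
      have : Tendsto (fun z : ℂ => -a / (2 * z)) (cocompact ℂ) (𝓝 0) := by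
        have := hinv.const_mul (-a / 2)
        simp only [mul_zero] at this
        refine this.congr fun z => ?_
        rw [div_mul_eq_mul_div, mul_comm (2:ℂ) z, ← div_div]
        ring_nf
      simpa [Function.comp_def] using (Complex.continuous_exp.tendsto 0).comp this
    have h3 : Tendsto (fun z : ℂ => f (Complex.I * a / (2 * b * z))) (cocompact ℂ)
        (𝓝 (f 0)) := by
      have : Tendsto (fun z : ℂ => Complex.I * a / (2 * b * z)) (cocompact ℂ) (𝓝 0) := by
        have := hinv.const_mul (Complex.I * a / (2 * b))
        simp only [mul_zero] at this
        refine this.congr fun z => ?_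
        field_simp
      exact (hf.continuous.tendsto 0).comp this
    have := (h1.mul h2).mul h3
    simp only [zero_mul] at this
    refine this.congr' ?_
    filter_upwards [(Filter.mem_cocompact.mpr ⟨{0}, isCompact_singleton,
      subset_rfl⟩ : {0}ᶜ ∈ cocompact ℂ)] with z hz
    exact (hfe z hz).symm
  have hzero : ∀ z, g z = 0 := fun z => hgd.apply_eq_of_tendsto_cocompact z htend
  obtain ⟨z, hz⟩ := hne
  have := hzero z
  simp only [hg, mul_eq_zero, Complex.exp_ne_zero, false_or] at this
  exact hz this
end

section
/- Let a, b be complex numbers with a ≠ 0, let λ ∈ ℂ, and let g be an entire function with g(0) = 1 satisfying z² g''(z) + (2z - a) g'(z) + b² z² g(z) = λ g(z) for all z. Define A(z) = e^{a/(2z)} g(z) for z ≠ 0. Then A'(z) A(-z) + A'(-z) A(z) = -a/z² for all z ∈ ℂ*. -/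
open Complex

/-- If `g` is entire with `g(0) = 1` and `z²g'' + (2z-a)g' + b²z²g = λg`, then
`A(z) = e^{a/(2z)} g(z)` satisfies `A'(z)A(-z) + A'(-z)A(z) = -a/z²` on `ℂ*`. -/
theorem stmt5 (a b lam : ℂ) (ha : a ≠ 0) (g : ℂ → ℂ) (hg : Differentiable ℂ g)
    (hg0 : g 0 = 1)
    (hode : ∀ z : ℂ,
      z ^ 2 * deriv (deriv g) z + (2 * z - a) * deriv g z + b ^ 2 * z ^ 2 * g z = lam * g z)
    (A : ℂ → ℂ) (hA : ∀ z : ℂ, A z = Complex.exp (a / (2 * z)) * g z) :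
    ∀ z : ℂ, z ≠ 0 → deriv A z * A (-z) + deriv A (-z) * A z = -a / z ^ 2 := by
  have hg2 : Differentiable ℂ (deriv g) :=
    ((hg.contDiff (n := 2)).iterate_deriv' 1 1).differentiable (by simp)
  set G := deriv g with hG
  -- derivative of w ↦ g (-w) and w ↦ G (-w)
  have hgn : ∀ z : ℂ, HasDerivAt (fun w => g (-w)) (-(G (-z))) z := by
    intro z
    have := ((hg (-z)).hasDerivAt).comp z (hasDerivAt_neg z)
    simpa [Function.comp_def] using this
  have hGn : ∀ z : ℂ, HasDerivAt (fun w => G (-w)) (-(deriv G (-z))) z := by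
    intro z
    have := ((hg2 (-z)).hasDerivAt).comp z (hasDerivAt_neg z)
    simpa [Function.comp_def] using this
  -- the key combination φ has zero derivative
  have hderiv : ∀ z : ℂ, HasDerivAt
      (fun w => w ^ 2 * (G w * g (-w) + G (-w) * g w) - a * (g w * g (-w)) + a) 0 z := by
    intro z
    have hgz : HasDerivAt g (G z) z := (hg z).hasDerivAt
    have hGz : HasDerivAt G (deriv G z) z := (hg2 z).hasDerivAt
    have h1 : HasDerivAt (fun w : ℂ => w ^ 2) (2 * z) z := by
      simpa using hasDerivAt_pow 2 z
    have hS := (hGz.mul (hgn z)).add ((hGn z).mul hgz)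
    have hQ := hgz.mul (hgn z)
    have h := ((h1.mul hS).sub (hQ.const_mul a)).add_const a
    have hD : 2 * z * (G z * g (-z) + G (-z) * g z) +
        z ^ 2 * ((deriv G z * g (-z) + G z * -G (-z)) +
          (-deriv G (-z) * g z + G (-z) * G z)) -
        a * (G z * g (-z) + g z * -G (-z)) = 0 := by
      have e1 := hode z
      have e2 := hode (-z)
      linear_combination g (-z) * e1 - g z * e2
    simp only [Pi.add_apply, Pi.mul_apply] at h
    rw [hD] at h
    exact h
  have hdiff : Differentiable ℂ
      (fun w : ℂ => w ^ 2 * (G w * g (-w) + G (-w) * g w) - a * (g w * g (-w)) + a) :=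
    fun z => (hderiv z).differentiableAt
  have key : ∀ w : ℂ,
      w ^ 2 * (G w * g (-w) + G (-w) * g w) - a * (g w * g (-w)) + a = 0 := by
    intro w
    have hc := is_const_of_deriv_eq_zero hdiff (fun x => (hderiv x).deriv) w 0
    simpa [hg0] using hc
  -- derivative of A away from 0
  have hAeq : A = fun y => Complex.exp (a / 2 * y⁻¹) * g y := by
    funext y
    rw [hA y, show a / (2 * y) = a / 2 * y⁻¹ by rw [div_eq_mul_inv, mul_inv]; ring]
  have hAd : ∀ w : ℂ, w ≠ 0 → HasDerivAt A
      (Complex.exp (a / 2 * w⁻¹) * (a / 2 * -(w ^ 2)⁻¹) * g w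
        + Complex.exp (a / 2 * w⁻¹) * G w) w := by
    intro w hw
    have hinv : HasDerivAt (fun y : ℂ => a / 2 * y⁻¹) (a / 2 * -(w ^ 2)⁻¹) w :=
      (hasDerivAt_inv hw).const_mul (a / 2)
    have hexp := hinv.cexp
    have := hexp.mul ((hg w).hasDerivAt)
    rw [hAeq]
    exact this
  intro z hz
  have hz' : (-z : ℂ) ≠ 0 := neg_ne_zero.mpr hz
  have hd1 := (hAd z hz).deriv
  have hd2 := (hAd (-z) hz').deriv
  have hEE : Complex.exp (a / 2 * z⁻¹) * Complex.exp (a / 2 * (-z)⁻¹) = 1 := by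
    rw [← Complex.exp_add, show a / 2 * z⁻¹ + a / 2 * (-z)⁻¹ = 0 by
      field_simp
      ring]
    exact Complex.exp_zero
  rw [hd1, hd2, hAeq]
  simp only [neg_sq]
  have keyz := key z
  set E1 := Complex.exp (a / 2 * z⁻¹) with hE1
  set E2 := Complex.exp (a / 2 * (-z)⁻¹) with hE2
  have hzz : z * z⁻¹ = 1 := mul_inv_cancel₀ hz
  linear_combination (E1 * E2 / z ^ 2) * keyz + (-a / z ^ 2) * hEE +
    (-(E1 * E2 * (g z * G (-z) + G z * g (-z))) * (z * z⁻¹ + 1)) * hzz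
end

section
/- Let a, b, λ be complex numbers and let f be holomorphic on ℂ* satisfying z² f''(z) + 2z f'(z) + (b² z² - a²/(4z²)) f(z) = λ f(z). Set F(z) = f(z) f(-z). Then F satisfies the third-order equation (z² F)'''(z) + (4b² z² - 4λ - a²/z²) F'(z) + (8 b² z - 4λ/z) F(z) = 0 on ℂ*. -/
open Complex

/-- If `f` solves `z²f'' + 2zf' + (b²z² - a²/(4z²))f = λf` on `ℂ*`, then
`F(z) = f(z)f(-z)` solves `(z²F)''' + (4b²z² - 4λ - a²/z²)F' + (8b²z - 4λ/z)F = 0` on `ℂ*`. -/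
theorem stmt6 (a b lam : ℂ) (f : ℂ → ℂ) (hf : DifferentiableOn ℂ f {0}ᶜ)
    (hode : ∀ z : ℂ, z ≠ 0 →
      z ^ 2 * deriv (deriv f) z + 2 * z * deriv f z +
        (b ^ 2 * z ^ 2 - a ^ 2 / (4 * z ^ 2)) * f z = lam * f z)
    (F : ℂ → ℂ) (hF : ∀ z : ℂ, F z = f z * f (-z)) :
    ∀ z : ℂ, z ≠ 0 →
      deriv^[3] (fun w => w ^ 2 * F w) z +
        (4 * b ^ 2 * z ^ 2 - 4 * lam - a ^ 2 / z ^ 2) * deriv F z +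
        (8 * b ^ 2 * z - 4 * lam / z) * F z = 0 := by
  have hS : IsOpen ({(0:ℂ)}ᶜ) := isOpen_compl_singleton
  have hA : AnalyticOnNhd ℂ f {0}ᶜ := hf.analyticOnNhd hS
  set f1 := deriv f with hf1
  set f2 := deriv f1 with hf2
  set f3 := deriv f2 with hf3
  have hA1 : AnalyticOnNhd ℂ f1 {0}ᶜ := hA.deriv
  have hA2 : AnalyticOnNhd ℂ f2 {0}ᶜ := hA1.deriv
  have hd0 : ∀ w : ℂ, w ≠ 0 → HasDerivAt f (f1 w) w := fun w hw =>
    (hA w hw).differentiableAt.hasDerivAt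
  have hd1 : ∀ w : ℂ, w ≠ 0 → HasDerivAt f1 (f2 w) w := fun w hw =>
    (hA1 w hw).differentiableAt.hasDerivAt
  have hd2 : ∀ w : ℂ, w ≠ 0 → HasDerivAt f2 (f3 w) w := fun w hw =>
    (hA2 w hw).differentiableAt.hasDerivAt
  have hneg : ∀ w : ℂ, w ≠ 0 → (-w : ℂ) ≠ 0 := fun w hw => neg_ne_zero.2 hw
  have hn0 : ∀ w : ℂ, w ≠ 0 → HasDerivAt (fun u => f (-u)) (-f1 (-w)) w := by
    intro w hw
    have h := (hd0 (-w) (hneg w hw)).comp w (hasDerivAt_neg w)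
    simp only [mul_neg, mul_one] at h
    exact h
  have hn1 : ∀ w : ℂ, w ≠ 0 → HasDerivAt (fun u => f1 (-u)) (-f2 (-w)) w := by
    intro w hw
    have h := (hd1 (-w) (hneg w hw)).comp w (hasDerivAt_neg w)
    simp only [mul_neg, mul_one] at h
    exact h
  have hn2 : ∀ w : ℂ, w ≠ 0 → HasDerivAt (fun u => f2 (-u)) (-f3 (-w)) w := by
    intro w hw
    have h := (hd2 (-w) (hneg w hw)).comp w (hasDerivAt_neg w)
    simp only [mul_neg, mul_one] at h
    exact h
  have hFe : F = fun u => f u * f (-u) := funext hF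
  have hSmem : ∀ w : ℂ, w ≠ 0 → {(0 : ℂ)}ᶜ ∈ nhds w := fun w hw => hS.mem_nhds hw
  -- F and its derivatives
  have hFd : ∀ w : ℂ, w ≠ 0 →
      HasDerivAt F (f1 w * f (-w) - f w * f1 (-w)) w := by
    intro w hw
    rw [hFe]
    have := (hd0 w hw).mul (hn0 w hw)
    convert this using 1 <;> first | rfl | ring1 | (funext x; ring1) | (funext x; simp only [Pi.mul_apply, Pi.sub_apply, Pi.add_apply]; ring1)
  have hF1d : ∀ w : ℂ, w ≠ 0 →
      HasDerivAt (fun w => f1 w * f (-w) - f w * f1 (-w))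
        (f2 w * f (-w) - 2 * f1 w * f1 (-w) + f w * f2 (-w)) w := by
    intro w hw
    have := ((hd1 w hw).mul (hn0 w hw)).sub ((hd0 w hw).mul (hn1 w hw))
    convert this using 1 <;> first | rfl | ring1 | (funext x; ring1) | (funext x; simp only [Pi.mul_apply, Pi.sub_apply, Pi.add_apply]; ring1)
  have hF2d : ∀ w : ℂ, w ≠ 0 →
      HasDerivAt (fun w => f2 w * f (-w) - 2 * f1 w * f1 (-w) + f w * f2 (-w))
        (f3 w * f (-w) - 3 * f2 w * f1 (-w) + 3 * f1 w * f2 (-w) - f w * f3 (-w)) w := by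
    intro w hw
    have := (((hd2 w hw).mul (hn0 w hw)).sub
      (((hd1 w hw).mul (hn1 w hw)).const_mul 2)).add ((hd0 w hw).mul (hn2 w hw))
    convert this using 1 <;> first | rfl | ring1 | (funext x; ring1) | (funext x; simp only [Pi.mul_apply, Pi.sub_apply, Pi.add_apply]; ring1)
  have hderivF : ∀ w : ℂ, w ≠ 0 → deriv F w = f1 w * f (-w) - f w * f1 (-w) :=
    fun w hw => (hFd w hw).deriv
  intro z hz
  -- G = w^2 F and its three derivatives
  have hGd : ∀ w : ℂ, w ≠ 0 → HasDerivAt (fun w => w ^ 2 * F w)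
      (2 * w * F w + w ^ 2 * (f1 w * f (-w) - f w * f1 (-w))) w := by
    intro w hw
    have hp : HasDerivAt (fun u : ℂ => u ^ 2) (2 * w) w := by
      simpa using hasDerivAt_pow 2 w
    have := hp.mul (hFd w hw)
    convert this using 1 <;> first | rfl | ring1 | (funext x; ring1) | (funext x; simp only [Pi.mul_apply, Pi.sub_apply, Pi.add_apply]; ring1)
  have hderivG : ∀ w : ℂ, w ≠ 0 → deriv (fun w => w ^ 2 * F w) w
      = 2 * w * F w + w ^ 2 * (f1 w * f (-w) - f w * f1 (-w)) :=
    fun w hw => (hGd w hw).deriv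
  have hG1d : ∀ w : ℂ, w ≠ 0 →
      HasDerivAt (fun w => 2 * w * F w + w ^ 2 * (f1 w * f (-w) - f w * f1 (-w)))
        (2 * F w + 4 * w * (f1 w * f (-w) - f w * f1 (-w))
          + w ^ 2 * (f2 w * f (-w) - 2 * f1 w * f1 (-w) + f w * f2 (-w))) w := by
    intro w hw
    have h1 : HasDerivAt (fun u : ℂ => 2 * u) (2 : ℂ) w := by
      simpa using (hasDerivAt_id w).const_mul (2 : ℂ)
    have hp : HasDerivAt (fun u : ℂ => u ^ 2) (2 * w) w := by
      simpa using hasDerivAt_pow 2 w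
    have := (h1.mul (hFd w hw)).add (hp.mul (hF1d w hw))
    convert this using 1 <;> first | rfl | ring1 | (funext x; ring1) | (funext x; simp only [Pi.mul_apply, Pi.sub_apply, Pi.add_apply]; ring1)
  have hderivG2 : ∀ w : ℂ, w ≠ 0 → deriv (deriv (fun w => w ^ 2 * F w)) w
      = 2 * F w + 4 * w * (f1 w * f (-w) - f w * f1 (-w))
        + w ^ 2 * (f2 w * f (-w) - 2 * f1 w * f1 (-w) + f w * f2 (-w)) := by
    intro w hw
    have heq : deriv (fun w => w ^ 2 * F w) =ᶠ[nhds w]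
        fun w => 2 * w * F w + w ^ 2 * (f1 w * f (-w) - f w * f1 (-w)) :=
      Filter.eventuallyEq_of_mem (hSmem w hw) (fun u hu => hderivG u hu)
    rw [heq.deriv_eq]
    exact (hG1d w hw).deriv
  have hG2d : HasDerivAt
      (fun w => 2 * F w + 4 * w * (f1 w * f (-w) - f w * f1 (-w))
        + w ^ 2 * (f2 w * f (-w) - 2 * f1 w * f1 (-w) + f w * f2 (-w)))
      (6 * (f1 z * f (-z) - f z * f1 (-z))
        + 6 * z * (f2 z * f (-z) - 2 * f1 z * f1 (-z) + f z * f2 (-z))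
        + z ^ 2 * (f3 z * f (-z) - 3 * f2 z * f1 (-z) + 3 * f1 z * f2 (-z) - f z * f3 (-z)))
      z := by
    have hp : HasDerivAt (fun u : ℂ => u ^ 2) (2 * z) z := by
      simpa using hasDerivAt_pow 2 z
    have h4 : HasDerivAt (fun u : ℂ => 4 * u) (4 : ℂ) z := by
      simpa using (hasDerivAt_id z).const_mul (4 : ℂ)
    have := (((hFd z hz).const_mul 2).add (h4.mul (hF1d z hz))).add (hp.mul (hF2d z hz))
    convert this using 1 <;> first | rfl | ring1 | (funext x; ring1) | (funext x; simp only [Pi.mul_apply, Pi.sub_apply, Pi.add_apply]; ring1)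
  have hiter : deriv^[3] (fun w => w ^ 2 * F w) z
      = 6 * (f1 z * f (-z) - f z * f1 (-z))
        + 6 * z * (f2 z * f (-z) - 2 * f1 z * f1 (-z) + f z * f2 (-z))
        + z ^ 2 * (f3 z * f (-z) - 3 * f2 z * f1 (-z) + 3 * f1 z * f2 (-z) - f z * f3 (-z)) := by
    have h3 : deriv^[3] (fun w => w ^ 2 * F w) z
        = deriv (deriv (deriv (fun w => w ^ 2 * F w))) z := by
      simp [Function.iterate_succ_apply']
    rw [h3]
    have heq : deriv (deriv (fun w => w ^ 2 * F w)) =ᶠ[nhds z]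
        fun w => 2 * F w + 4 * w * (f1 w * f (-w) - f w * f1 (-w))
          + w ^ 2 * (f2 w * f (-w) - 2 * f1 w * f1 (-w) + f w * f2 (-w)) :=
      Filter.eventuallyEq_of_mem (hSmem z hz) (fun u hu => hderivG2 u hu)
    rw [heq.deriv_eq]
    exact hG2d.deriv
  -- cleared ODE and its derivative
  have hzero : ∀ w : ℂ, w ≠ 0 →
      4 * w ^ 4 * f2 w + 8 * w ^ 3 * f1 w
        + (4 * b ^ 2 * w ^ 4 - a ^ 2 - 4 * lam * w ^ 2) * f w = 0 := by
    intro w hw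
    have E := hode w hw
    have haux : (4 * w ^ 2) * (a ^ 2 / (4 * w ^ 2)) = a ^ 2 := by
      field_simp
    linear_combination (4 * w ^ 2) * E + f w * haux
  have hderivh : ∀ w : ℂ, w ≠ 0 → deriv (fun w => 4 * w ^ 4 * f2 w + 8 * w ^ 3 * f1 w
      + (4 * b ^ 2 * w ^ 4 - a ^ 2 - 4 * lam * w ^ 2) * f w) w = 0 := by
    intro w hw
    have heq : (fun w => 4 * w ^ 4 * f2 w + 8 * w ^ 3 * f1 w
        + (4 * b ^ 2 * w ^ 4 - a ^ 2 - 4 * lam * w ^ 2) * f w) =ᶠ[nhds w] fun _ => 0 :=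
      Filter.eventuallyEq_of_mem (hSmem w hw) (fun u hu => hzero u hu)
    rw [heq.deriv_eq, deriv_const]
  have hhd : ∀ w : ℂ, w ≠ 0 → HasDerivAt (fun w => 4 * w ^ 4 * f2 w + 8 * w ^ 3 * f1 w
      + (4 * b ^ 2 * w ^ 4 - a ^ 2 - 4 * lam * w ^ 2) * f w)
      (16 * w ^ 3 * f2 w + 4 * w ^ 4 * f3 w + 24 * w ^ 2 * f1 w + 8 * w ^ 3 * f2 w
        + (16 * b ^ 2 * w ^ 3 - 8 * lam * w) * f w
        + (4 * b ^ 2 * w ^ 4 - a ^ 2 - 4 * lam * w ^ 2) * f1 w) w := by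
    intro w hw
    have hp4 : HasDerivAt (fun u : ℂ => 4 * u ^ 4) (16 * w ^ 3) w := by
      have := (hasDerivAt_pow 4 w).const_mul (4 : ℂ)
      convert this using 1 <;> first | rfl | (push_cast; ring1) | (funext x; push_cast; ring1) | (funext x; simp only [Pi.sub_apply]; ring1)
    have hp3 : HasDerivAt (fun u : ℂ => 8 * u ^ 3) (24 * w ^ 2) w := by
      have := (hasDerivAt_pow 3 w).const_mul (8 : ℂ)
      convert this using 1 <;> first | rfl | (push_cast; ring1) | (funext x; push_cast; ring1) | (funext x; simp only [Pi.sub_apply]; ring1)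
    have hpc : HasDerivAt (fun u : ℂ => 4 * b ^ 2 * u ^ 4 - a ^ 2 - 4 * lam * u ^ 2)
        (16 * b ^ 2 * w ^ 3 - 8 * lam * w) w := by
      have h1 := (hasDerivAt_pow 4 w).const_mul (4 * b ^ 2)
      have h2 := (hasDerivAt_pow 2 w).const_mul (4 * lam)
      have := (h1.sub_const (a ^ 2)).sub h2
      convert this using 1 <;> first | rfl | (push_cast; ring1) | (funext x; push_cast; ring1) | (funext x; simp only [Pi.sub_apply]; ring1)
    have := ((hp4.mul (hd2 w hw)).add (hp3.mul (hd1 w hw))).add (hpc.mul (hd0 w hw))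
    convert this using 1 <;> first | rfl | ring1 | (funext x; ring1) | (funext x; simp only [Pi.mul_apply, Pi.sub_apply, Pi.add_apply]; ring1)
  -- the four polynomial identities
  have E1 : 4 * z ^ 4 * f2 z + 8 * z ^ 3 * f1 z
      + (4 * b ^ 2 * z ^ 4 - a ^ 2 - 4 * lam * z ^ 2) * f z = 0 := hzero z hz
  have E2 : 4 * z ^ 4 * f2 (-z) - 8 * z ^ 3 * f1 (-z)
      + (4 * b ^ 2 * z ^ 4 - a ^ 2 - 4 * lam * z ^ 2) * f (-z) = 0 := by
    have := hzero (-z) (hneg z hz)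
    linear_combination this
  have E3 : 16 * z ^ 3 * f2 z + 4 * z ^ 4 * f3 z + 24 * z ^ 2 * f1 z + 8 * z ^ 3 * f2 z
      + (16 * b ^ 2 * z ^ 3 - 8 * lam * z) * f z
      + (4 * b ^ 2 * z ^ 4 - a ^ 2 - 4 * lam * z ^ 2) * f1 z = 0 := by
    rw [← (hhd z hz).deriv]; exact hderivh z hz
  have E4 : -16 * z ^ 3 * f2 (-z) + 4 * z ^ 4 * f3 (-z) + 24 * z ^ 2 * f1 (-z)
      - 8 * z ^ 3 * f2 (-z) - (16 * b ^ 2 * z ^ 3 - 8 * lam * z) * f (-z)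
      + (4 * b ^ 2 * z ^ 4 - a ^ 2 - 4 * lam * z ^ 2) * f1 (-z) = 0 := by
    have h1 := (hhd (-z) (hneg z hz)).deriv
    have h2 := hderivh (-z) (hneg z hz)
    rw [h2] at h1
    linear_combination -h1
  -- final assembly
  rw [hiter, hderivF z hz, hF z]
  have ha2 : z ^ 2 * (a ^ 2 / z ^ 2) = a ^ 2 := by field_simp
  have hl : z * (4 * lam / z) = 4 * lam := by field_simp
  have key : z ^ 2 * ((6 * (f1 z * f (-z) - f z * f1 (-z))
        + 6 * z * (f2 z * f (-z) - 2 * f1 z * f1 (-z) + f z * f2 (-z))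
        + z ^ 2 * (f3 z * f (-z) - 3 * f2 z * f1 (-z) + 3 * f1 z * f2 (-z) - f z * f3 (-z)))
      + (4 * b ^ 2 * z ^ 2 - 4 * lam - a ^ 2 / z ^ 2) * (f1 z * f (-z) - f z * f1 (-z))
      + (8 * b ^ 2 * z - 4 * lam / z) * (f z * f (-z))) = 0 := by
    linear_combination (-(3:ℂ)/4 * f1 (-z)) * E1 + ((3:ℂ)/4 * f1 z) * E2
      + (f (-z) / 4) * E3 - (f z / 4) * E4
      - (f1 z * f (-z) - f z * f1 (-z)) * ha2 - z * (f z * f (-z)) * hl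
  rcases mul_eq_zero.mp key with h | h
  · exact absurd h (pow_ne_zero 2 hz)
  · exact h
end

section
/- Let a, b, λ be complex numbers with a ≠ 0, and let f be a function holomorphic in a neighborhood of 0 satisfying z² f''(z) + (2z - a) f'(z) + b² z² f(z) = λ f(z) there. If f(0) = 0, then f is identically zero on that neighborhood. -/
open Complex

/-- If `a ≠ 0` and `f` solves `z²f'' + (2z-a)f' + b²z²f = λf` on an open connected
neighborhood of `0` with `f(0) = 0`, then `f ≡ 0` on that neighborhood. -/
theorem stmt8 (a b lam : ℂ) (ha : a ≠ 0) (U : Set ℂ) (hU : IsOpen U)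
    (hUconn : IsPreconnected U) (h0 : (0 : ℂ) ∈ U) (f : ℂ → ℂ)
    (hf : DifferentiableOn ℂ f U)
    (hode : ∀ z ∈ U,
      z ^ 2 * deriv (deriv f) z + (2 * z - a) * deriv f z + b ^ 2 * z ^ 2 * f z = lam * f z)
    (hf0 : f 0 = 0) :
    ∀ z ∈ U, f z = 0 := by
  have hanal : AnalyticOnNhd ℂ f U := hf.analyticOnNhd hU
  have h0a : AnalyticAt ℂ f 0 := hanal 0 h0
  have hev : f =ᶠ[nhds 0] 0 := by
    by_contra hne
    have hord : analyticOrderAt f 0 ≠ ⊤ := fun h => hne (analyticOrderAt_eq_top.mp h)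
    lift analyticOrderAt f 0 to ℕ using hord with n hn
    rw [eq_comm, h0a.analyticOrderAt_eq_natCast] at hn
    obtain ⟨g, hg0, hgne, hfg⟩ := hn
    simp only [sub_zero, smul_eq_mul] at hfg
    replace hfg : f =ᶠ[nhds 0] fun z => z ^ n * g z := hfg
    -- n ≥ 1
    obtain _ | m := n
    · exact hgne (by simpa [hf0] using hfg.self_of_nhds.symm)
    -- g analytic on a neighborhood s of 0
    obtain ⟨s, hs, hgs⟩ := hg0.eventually_analyticAt.exists_mem
    have hgs : AnalyticOnNhd ℂ g s := hgs
    have h0s : (0 : ℂ) ∈ s := mem_of_mem_nhds hs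
    -- first derivative formula
    have hd1 : deriv f =ᶠ[nhds 0] fun z =>
        ((m : ℂ) + 1) * z ^ m * g z + z ^ (m + 1) * deriv g z := by
      refine hfg.deriv.trans ?_
      filter_upwards [hs] with z hz
      have h := (hasDerivAt_pow (m + 1) z).fun_mul ((hgs z hz).differentiableAt.hasDerivAt)
      simpa [Nat.add_sub_cancel, mul_comm, mul_assoc, mul_left_comm] using h.deriv
    -- second derivative formula
    have hd2 : deriv (deriv f) =ᶠ[nhds 0] fun z =>
        (((m : ℂ) + 1) * ((m : ℂ) * z ^ (m - 1)) * g z + ((m : ℂ) + 1) * z ^ m * deriv g z) +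
          (((m : ℂ) + 1) * z ^ m * deriv g z + z ^ (m + 1) * deriv (deriv g) z) := by
      refine hd1.deriv.trans ?_
      filter_upwards [hs] with z hz
      have h1 : HasDerivAt (fun z : ℂ => ((m : ℂ) + 1) * z ^ m * g z)
          (((m : ℂ) + 1) * ((m : ℂ) * z ^ (m - 1)) * g z
            + ((m : ℂ) + 1) * z ^ m * deriv g z) z := by
        have := ((hasDerivAt_pow m z).const_mul ((m : ℂ) + 1)).mul
          ((hgs z hz).differentiableAt.hasDerivAt)
        exact this.congr_deriv (by ring)
      have h2 : HasDerivAt (fun z : ℂ => z ^ (m + 1) * deriv g z)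
          (((m : ℂ) + 1) * z ^ m * deriv g z + z ^ (m + 1) * deriv (deriv g) z) z := by
        have := (hasDerivAt_pow (m + 1) z).fun_mul
          ((hgs.deriv z hz).differentiableAt.hasDerivAt)
        refine this.congr_deriv ?_
        push_cast [Nat.add_sub_cancel]
        ring
      exact (h1.add h2).deriv
    -- the auxiliary function G
    set G : ℂ → ℂ := fun z =>
      ((m : ℂ) + 1) * (m : ℂ) * z * g z + 2 * ((m : ℂ) + 1) * z ^ 2 * deriv g z
        + z ^ 3 * deriv (deriv g) z
        + (2 * z - a) * (((m : ℂ) + 1) * g z + z * deriv g z)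
        + b ^ 2 * z ^ 3 * g z - lam * z * g z with hG
    -- G vanishes on a punctured neighborhood of 0
    have hGz : G =ᶠ[nhdsWithin 0 {(0:ℂ)}ᶜ] 0 := by
      have hmem : U ∈ nhds (0 : ℂ) := hU.mem_nhds h0
      filter_upwards [nhdsWithin_le_nhds hmem, nhdsWithin_le_nhds hfg,
        nhdsWithin_le_nhds hd1, nhdsWithin_le_nhds hd2,
        self_mem_nhdsWithin] with z hzU hfz hd1z hd2z hz0
      have hzne : (z : ℂ) ≠ 0 := hz0
      have hodez := hode z hzU
      rw [hfz, hd1z, hd2z] at hodez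
      have hzm : (z : ℂ) ^ m ≠ 0 := pow_ne_zero _ hzne
      have key : z ^ m * G z = 0 := by
        rw [← sub_eq_zero] at hodez
        rw [← hodez, hG]
        obtain _ | k := m
        · push_cast
          ring
        · simp only [Nat.add_sub_cancel]
          push_cast
          ring
      simpa [hzm] using mul_eq_zero.mp key
    -- G is continuous at 0
    have hcont : ContinuousAt G 0 := by
      have c1 : ContinuousAt g 0 := (hgs 0 h0s).continuousAt
      have c2 : ContinuousAt (deriv g) 0 := (hgs.deriv 0 h0s).continuousAt
      have c3 : ContinuousAt (deriv (deriv g)) 0 := (hgs.deriv.deriv 0 h0s).continuousAt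
      rw [hG]
      fun_prop
    -- limit uniqueness gives G 0 = 0
    have hlim1 : Filter.Tendsto G (nhdsWithin 0 {(0:ℂ)}ᶜ) (nhds (G 0)) :=
      hcont.continuousWithinAt.tendsto
    have hlim2 : Filter.Tendsto G (nhdsWithin 0 {(0:ℂ)}ᶜ) (nhds 0) := by
      rw [Filter.tendsto_congr' hGz]
      exact tendsto_const_nhds
    have hG0 : G 0 = 0 := tendsto_nhds_unique hlim1 hlim2
    rw [hG] at hG0
    simp only [mul_zero, zero_mul, zero_pow, zero_add, add_zero, mul_one,
      ne_eq, OfNat.ofNat_ne_zero, not_false_eq_true, pow_succ] at hG0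
    have : (2 * (0:ℂ) - a) * (((m : ℂ) + 1) * g 0 + 0 * deriv g 0) = 0 := by
      have := hG0
      simpa using this
    simp only [mul_zero, zero_mul, add_zero, two_mul, zero_sub] at this
    rcases mul_eq_zero.mp this with h | h
    · exact ha (neg_eq_zero.mp h)
    · rcases mul_eq_zero.mp h with h' | h'
      · exact_mod_cast Nat.cast_add_one_ne_zero m h'
      · exact hgne h'
  exact fun z hz => hanal.eqOn_zero_of_preconnected_of_eventuallyEq_zero hUconn h0 hev hz
end

section
/- Let a, b, λ be complex numbers and let f(z) = Σ_{n≥0} α_n zⁿ be a power series satisfying z² f'' + (2z - a) f' + b² z² f = λ f. Write F(z) = f(z) f(-z) = Σ_{n≥0} u_n z^{2n}. Then for all n ≥ 0, λ u_n = n(n+1) u_n + 2b² (n/(2n+1)) u_{n-1} - (a²/2)((n+1)/(2n+1)) u_{n+1}, with the convention u_{-1} = 0. -/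
open Complex FormalMultilinearSeries

private lemma myOnBall {c : ℕ → ℂ} {g : ℂ → ℂ}
    (h : ∀ z : ℂ, HasSum (fun n : ℕ => c n * z ^ n) (g z)) :
    HasFPowerSeriesOnBall g (ofScalars ℂ c) 0 ⊤ := by
  refine ⟨?_, by simp, ?_⟩
  · rw [(ofScalars ℂ c).radius_eq_top_of_summable_norm ?_]
    intro r
    have hs : Summable fun n : ℕ => ‖c n * ((r : ℝ) : ℂ) ^ n‖ :=
      summable_norm_iff.mpr (h ((r : ℝ) : ℂ)).summable
    apply hs.congr
    intro n
    rw [ofScalars_norm, norm_mul, norm_pow, Complex.norm_real, NNReal.norm_eq]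
  · intro y _
    rw [zero_add]
    have hy := h y
    have heq : (fun n : ℕ => (ofScalars ℂ c) n fun _ => y) = fun n : ℕ => c n * y ^ n := by
      funext n
      rw [ofScalars_apply_eq, smul_eq_mul]
    rw [heq]
    exact hy

private lemma myDiff {c : ℕ → ℂ} {g : ℂ → ℂ}
    (h : ∀ z : ℂ, HasSum (fun n : ℕ => c n * z ^ n) (g z)) : Differentiable ℂ g := fun z =>
  ((myOnBall h).analyticAt_of_mem (by simp [edist_lt_top])).differentiableAt

private lemma myCoeffZero {c : ℕ → ℂ}
    (h : ∀ z : ℂ, HasSum (fun n : ℕ => c n * z ^ n) 0) : ∀ n, c n = 0 := by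
  have hp : HasFPowerSeriesAt (0 : ℂ → ℂ) (ofScalars ℂ c) 0 :=
    (myOnBall (g := (0 : ℂ → ℂ)) (by simpa using h)).hasFPowerSeriesAt
  have h0 := hp.eq_zero
  intro n
  have := (ofScalars_series_eq_zero (𝕜 := ℂ) ℂ).mp h0
  exact congrFun this n

private lemma myDerivHasSum {c : ℕ → ℂ} {g : ℂ → ℂ}
    (h : ∀ z : ℂ, HasSum (fun n : ℕ => c n * z ^ n) (g z)) (z : ℂ) :
    HasSum (fun n : ℕ => ((n : ℂ) + 1) * c (n + 1) * z ^ n) (deriv g z) := by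
  have hp := myOnBall h
  have hd := hp.fderiv
  have hs := hd.hasSum (y := z) (by simp [edist_lt_top])
  have hs1 := (ContinuousLinearMap.apply ℂ ℂ (1 : ℂ)).hasSum hs
  rw [zero_add] at hs1
  have hfd : (fderiv ℂ g z) 1 = deriv g z := fderiv_apply_one_eq_deriv
  simp only [ContinuousLinearMap.apply_apply] at hs1
  rw [hfd] at hs1
  refine HasSum.congr_fun hs1 ?_
  intro n
  rcases eq_or_ne z 0 with rfl | hz0
  · cases n with
    | zero =>
      have hargs : (fun _ : Fin 0 => (0 : ℂ)) = fun _ : Fin 0 => (1 : ℂ) :=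
        funext fun i => i.elim0
      rw [hargs]
      have hdiag := FormalMultilinearSeries.derivSeries_apply_diag (ofScalars ℂ c) 0 (1 : ℂ)
      rw [hdiag, ofScalars_apply_eq]
      simp
    | succ m =>
      have h0 : ((ofScalars ℂ c).derivSeries (m + 1)) (fun _ : Fin (m + 1) => (0 : ℂ)) = 0 :=
        ContinuousMultilinearMap.map_coord_zero _ (0 : Fin (m + 1)) rfl
      rw [h0]
      simp
  · have hdiag := FormalMultilinearSeries.derivSeries_apply_diag (ofScalars ℂ c) n z
    rw [ofScalars_apply_eq] at hdiag
    set L := (ofScalars ℂ c).derivSeries n fun _ : Fin n => z with hL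
    have hLz : L z = z * L 1 := by
      conv_lhs => rw [show z = z • (1 : ℂ) by simp, L.map_smul, smul_eq_mul]
    apply mul_left_cancel₀ hz0
    rw [← hLz, hdiag]
    push_cast [nsmul_eq_mul, smul_eq_mul]
    ring

private lemma myOddSum {z S : ℂ} {c : ℕ → ℂ}
    (h : HasSum (fun m : ℕ => c m * z ^ m) S) (h0 : ∀ m, m % 2 = 0 → c m = 0) :
    HasSum (fun n : ℕ => c (2 * n + 1) * z ^ (2 * n + 1)) S := by
  have h2 := (Function.Injective.hasSum_iff (g := fun n : ℕ => 2 * n + 1)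
    (f := fun m : ℕ => c m * z ^ m) (a := S)
    (fun x y hxy => by simp only at hxy; omega) (fun m hm => ?_)).mpr h
  · exact h2.congr_fun fun n => rfl
  have hm2 : m % 2 = 0 := by
    by_contra h'
    exact hm ⟨m / 2, show 2 * (m / 2) + 1 = m by omega⟩
  simp [h0 m hm2]

private lemma myEvenSum {z S : ℂ} {c : ℕ → ℂ}
    (h : HasSum (fun m : ℕ => c m * z ^ m) S) (h0 : ∀ m, m % 2 = 1 → c m = 0) :
    HasSum (fun n : ℕ => c (2 * n) * z ^ (2 * n)) S := by
  have h2 := (Function.Injective.hasSum_iff (g := fun n : ℕ => 2 * n)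
    (f := fun m : ℕ => c m * z ^ m) (a := S)
    (fun x y hxy => by simp only at hxy; omega) (fun m hm => ?_)).mpr h
  · exact h2.congr_fun fun n => rfl
  have hm2 : m % 2 = 1 := by
    by_contra h'
    exact hm ⟨m / 2, show 2 * (m / 2) = m by omega⟩
  simp [h0 m hm2]

private lemma myShiftSum {z S : ℂ} {d e : ℕ → ℂ} {k : ℕ}
    (hd : HasSum (fun n : ℕ => d n * z ^ (2 * n + 1)) S)
    (he : ∀ n, e (n + k) = d n) (he0 : ∀ n, n < k → e n = 0) :
    HasSum (fun n : ℕ => e n * z ^ (2 * n + 1)) (z ^ (2 * k) * S) := by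
  have h1 := hd.mul_left (z ^ (2 * k))
  have h2 : (fun n : ℕ => z ^ (2 * k) * (d n * z ^ (2 * n + 1)))
      = (fun n : ℕ => e n * z ^ (2 * n + 1)) ∘ (fun n : ℕ => n + k) := by
    funext n
    simp only [Function.comp_apply]
    rw [he n, show 2 * (n + k) + 1 = (2 * n + 1) + 2 * k by ring, pow_add]
    ring
  rw [h2] at h1
  refine (Function.Injective.hasSum_iff (add_left_injective k) (fun m hm => ?_)).mp h1
  have hmk : m < k := by
    by_contra h'
    exact hm ⟨m - k, show m - k + k = m by omega⟩
  simp [he0 m hmk]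

private lemma mySpreadEven {u : ℕ → ℂ} {z S : ℂ}
    (h : HasSum (fun n : ℕ => u n * z ^ (2 * n)) S) :
    HasSum (fun m : ℕ => (if m % 2 = 0 then u (m / 2) else 0) * z ^ m) S := by
  have hcomp : HasSum ((fun m : ℕ => (if m % 2 = 0 then u (m / 2) else 0) * z ^ m)
      ∘ (fun n : ℕ => 2 * n)) S := by
    refine HasSum.congr_fun h fun n => ?_
    have h1 : (2 * n) % 2 = 0 := by omega
    have h2 : (2 * n) / 2 = n := by omega
    simp only [Function.comp_apply, h1, h2, if_pos]
  refine (Function.Injective.hasSum_iff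
    (fun x y hxy => by have h' : 2 * x = 2 * y := hxy; omega) (fun m hm => ?_)).mp hcomp
  have hm2 : m % 2 = 1 := by
    by_contra h'
    exact hm ⟨m / 2, show 2 * (m / 2) = m by omega⟩
  simp [hm2]

private lemma mySpreadOdd {P : ℕ → ℂ} {z S : ℂ}
    (h : HasSum (fun n : ℕ => P n * z ^ (2 * n + 1)) S) :
    HasSum (fun m : ℕ => (if m % 2 = 1 then P (m / 2) else 0) * z ^ m) S := by
  have hcomp : HasSum ((fun m : ℕ => (if m % 2 = 1 then P (m / 2) else 0) * z ^ m)
      ∘ (fun n : ℕ => 2 * n + 1)) S := by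
    refine HasSum.congr_fun h fun n => ?_
    have h1 : (2 * n + 1) % 2 = 1 := by omega
    have h2 : (2 * n + 1) / 2 = n := by omega
    simp only [Function.comp_apply, h1, h2, if_pos]
  refine (Function.Injective.hasSum_iff
    (fun x y hxy => by have h' : 2 * x + 1 = 2 * y + 1 := hxy; omega) (fun m hm => ?_)).mp hcomp
  have hm2 : m % 2 = 0 := by
    by_contra h'
    exact hm ⟨m / 2, show 2 * (m / 2) + 1 = m by omega⟩
  simp [hm2]

/-- If `f(z) = Σ αₙ zⁿ` satisfies `z²f'' + (2z-a)f' + b²z²f = λf` and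
`f(z)f(-z) = Σ uₙ z^{2n}`, then
`λuₙ = n(n+1)uₙ + 2b² n/(2n+1) u_{n-1} - (a²/2)(n+1)/(2n+1) u_{n+1}` (with `u_{-1} = 0`). -/
theorem stmt9 (a b lam : ℂ) (α u : ℕ → ℂ) (f : ℂ → ℂ)
    (hf : ∀ z : ℂ, HasSum (fun n : ℕ => α n * z ^ n) (f z))
    (hode : ∀ z : ℂ,
      z ^ 2 * deriv (deriv f) z + (2 * z - a) * deriv f z + b ^ 2 * z ^ 2 * f z = lam * f z)
    (hu : ∀ z : ℂ, HasSum (fun n : ℕ => u n * z ^ (2 * n)) (f z * f (-z))) :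
    ∀ n : ℕ, lam * u n =
      n * (n + 1) * u n +
        2 * b ^ 2 * (n / (2 * n + 1)) * (if n = 0 then 0 else u (n - 1)) -
        (a ^ 2 / 2) * ((n + 1) / (2 * n + 1)) * u (n + 1) := by
  have hdf : Differentiable ℂ f := myDiff hf
  have hs1 : ∀ z : ℂ, HasSum (fun n : ℕ => ((n : ℂ) + 1) * α (n + 1) * z ^ n) (deriv f z) :=
    fun z => myDerivHasSum hf z
  have hdf1 : Differentiable ℂ (deriv f) := myDiff hs1
  have hs2 := fun z => myDerivHasSum hs1 z
  have hdf2 : Differentiable ℂ (deriv (deriv f)) := myDiff hs2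
  -- derivative of the ODE
  have hD : ∀ z : ℂ, z ^ 2 * deriv (deriv (deriv f)) z + (4 * z - a) * deriv (deriv f) z
      + 2 * deriv f z + 2 * b ^ 2 * z * f z + b ^ 2 * z ^ 2 * deriv f z = lam * deriv f z := by
    intro z
    have h1 : HasDerivAt f (deriv f z) z := (hdf z).hasDerivAt
    have h2 : HasDerivAt (deriv f) (deriv (deriv f) z) z := (hdf1 z).hasDerivAt
    have h3 : HasDerivAt (deriv (deriv f)) (deriv (deriv (deriv f)) z) z := (hdf2 z).hasDerivAt
    have p2 : HasDerivAt (fun w : ℂ => w ^ 2) (2 * z) z := by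
      simpa using hasDerivAt_pow 2 z
    have hL : HasDerivAt (fun w : ℂ => w ^ 2 * deriv (deriv f) w + (2 * w - a) * deriv f w
        + b ^ 2 * w ^ 2 * f w)
        (2 * z * deriv (deriv f) z + z ^ 2 * deriv (deriv (deriv f)) z
          + (2 * 1 * deriv f z + (2 * z - a) * deriv (deriv f) z)
          + (b ^ 2 * (2 * z) * f z + b ^ 2 * z ^ 2 * deriv f z)) z :=
      ((p2.mul h3).add (((hasDerivAt_id z).const_mul 2 |>.sub_const a).mul h2)).add
        ((p2.const_mul (b ^ 2)).mul h1)
    have hfun : (fun w : ℂ => w ^ 2 * deriv (deriv f) w + (2 * w - a) * deriv f w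
        + b ^ 2 * w ^ 2 * f w) = fun w : ℂ => lam * f w := funext fun w => hode w
    rw [hfun] at hL
    have hR : HasDerivAt (fun w : ℂ => lam * f w) (lam * deriv f z) z := h1.const_mul lam
    linear_combination hL.unique hR
  -- the product function and its derivatives
  set Ff : ℂ → ℂ := fun w => f w * f (-w) with hFfdef
  have hneg : ∀ (g : ℂ → ℂ), Differentiable ℂ g →
      ∀ w : ℂ, HasDerivAt (fun x : ℂ => g (-x)) (-deriv g (-w)) w := by
    intro g hg w
    have := ((hg (-w)).hasDerivAt).comp w (hasDerivAt_neg w)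
    simpa [Function.comp_def, mul_neg_one] using this
  have hF1 : ∀ w : ℂ, deriv Ff w = deriv f w * f (-w) - f w * deriv f (-w) := by
    intro w
    have hd : HasDerivAt Ff (deriv f w * f (-w) + f w * -deriv f (-w)) w :=
      (hdf w).hasDerivAt.mul (hneg f hdf w)
    rw [hd.deriv]
    ring
  have hF1fun : deriv Ff = fun w => deriv f w * f (-w) - f w * deriv f (-w) := funext hF1
  have hF2 : ∀ w : ℂ, deriv (deriv Ff) w = deriv (deriv f) w * f (-w)
      - 2 * deriv f w * deriv f (-w) + f w * deriv (deriv f) (-w) := by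
    intro w
    rw [hF1fun]
    have hd : HasDerivAt (fun x : ℂ => deriv f x * f (-x) - f x * deriv f (-x))
        ((deriv (deriv f) w * f (-w) + deriv f w * -deriv f (-w))
          - (deriv f w * deriv f (-w) + f w * -deriv (deriv f) (-w))) w :=
      ((hdf1 w).hasDerivAt.mul (hneg f hdf w)).sub
        ((hdf w).hasDerivAt.mul (hneg (deriv f) hdf1 w))
    rw [hd.deriv]
    ring
  have hF2fun : deriv (deriv Ff) = fun w => deriv (deriv f) w * f (-w)
      - 2 * deriv f w * deriv f (-w) + f w * deriv (deriv f) (-w) := funext hF2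
  have hF3 : ∀ w : ℂ, deriv (deriv (deriv Ff)) w = deriv (deriv (deriv f)) w * f (-w)
      - 3 * deriv (deriv f) w * deriv f (-w) + 3 * deriv f w * deriv (deriv f) (-w)
      - f w * deriv (deriv (deriv f)) (-w) := by
    intro w
    rw [hF2fun]
    have hd : HasDerivAt (fun x : ℂ => deriv (deriv f) x * f (-x)
        - 2 * deriv f x * deriv f (-x) + f x * deriv (deriv f) (-x))
        (((deriv (deriv (deriv f)) w * f (-w) + deriv (deriv f) w * -deriv f (-w))
          - (2 * deriv (deriv f) w * deriv f (-w) + 2 * deriv f w * -deriv (deriv f) (-w)))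
          + (deriv f w * deriv (deriv f) (-w) + f w * -deriv (deriv (deriv f)) (-w))) w :=
      (((hdf2 w).hasDerivAt.mul (hneg f hdf w)).sub
        (((hdf1 w).hasDerivAt.const_mul (2 : ℂ)).mul (hneg (deriv f) hdf1 w))).add
        ((hdf w).hasDerivAt.mul (hneg (deriv (deriv f)) hdf2 w))
    rw [hd.deriv]
    ring
  -- the third-order ODE for Ff
  have hHz : ∀ z : ℂ, z ^ 4 * deriv (deriv (deriv Ff)) z + 6 * z ^ 3 * deriv (deriv Ff) z
      + (6 * z ^ 2 + 4 * b ^ 2 * z ^ 4 - 4 * lam * z ^ 2 - a ^ 2) * deriv Ff z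
      + (8 * b ^ 2 * z ^ 3 - 4 * lam * z) * (f z * f (-z)) = 0 := by
    intro z
    rw [hF3 z, hF2 z, hF1 z]
    linear_combination (a * f (-z) + 2 * z * f (-z) - 3 * z ^ 2 * deriv f (-z)) * hode z
      + (-(a * f z) + 2 * z * f z + 3 * z ^ 2 * deriv f z) * hode (-z)
      + z ^ 2 * f (-z) * hD z - z ^ 2 * f z * hD (-z)
  -- power series coefficients of Ff
  classical
  set cF : ℕ → ℂ := fun m => if m % 2 = 0 then u (m / 2) else 0 with hcF
  have hFs : ∀ z : ℂ, HasSum (fun m : ℕ => cF m * z ^ m) (Ff z) := fun z => mySpreadEven (hu z)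
  set cF1 : ℕ → ℂ := fun n => ((n : ℂ) + 1) * cF (n + 1) with hcF1
  have hFs1 : ∀ z : ℂ, HasSum (fun n : ℕ => cF1 n * z ^ n) (deriv Ff z) := by
    intro z
    exact HasSum.congr_fun (myDerivHasSum hFs z) fun n => by rw [hcF1]
  set cF2 : ℕ → ℂ := fun n => ((n : ℂ) + 1) * cF1 (n + 1) with hcF2
  have hFs2 : ∀ z : ℂ, HasSum (fun n : ℕ => cF2 n * z ^ n) (deriv (deriv Ff) z) := by
    intro z
    exact HasSum.congr_fun (myDerivHasSum hFs1 z) fun n => by rw [hcF2]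
  set cF3 : ℕ → ℂ := fun n => ((n : ℂ) + 1) * cF2 (n + 1) with hcF3
  have hFs3 : ∀ z : ℂ, HasSum (fun n : ℕ => cF3 n * z ^ n) (deriv (deriv (deriv Ff)) z) := by
    intro z
    exact HasSum.congr_fun (myDerivHasSum hFs2 z) fun n => by rw [hcF3]
  -- parity support
  have hcFodd : ∀ m, m % 2 = 1 → cF m = 0 := by
    intro m hm
    simp [hcF, hm]
  have hcF1even : ∀ m, m % 2 = 0 → cF1 m = 0 := by
    intro m hm
    have h1 : (m + 1) % 2 = 1 := by omega
    simp [hcF1, hcFodd _ h1]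
  have hcF2odd : ∀ m, m % 2 = 1 → cF2 m = 0 := by
    intro m hm
    have h1 : (m + 1) % 2 = 0 := by omega
    simp [hcF2, hcF1even _ h1]
  have hcF3even : ∀ m, m % 2 = 0 → cF3 m = 0 := by
    intro m hm
    have h1 : (m + 1) % 2 = 1 := by omega
    simp [hcF3, hcF2odd _ h1]
  -- values
  have hvF : ∀ n : ℕ, cF (2 * n) = u n := by
    intro n
    have h1 : (2 * n) % 2 = 0 := by omega
    have h2 : (2 * n) / 2 = n := by omega
    simp [hcF, h1, h2]
  have hv1 : ∀ n : ℕ, cF1 (2 * n + 1) = (2 * (n : ℂ) + 2) * u (n + 1) := by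
    intro n
    have h1 : 2 * n + 1 + 1 = 2 * (n + 1) := by omega
    rw [hcF1]
    simp only [h1, hvF (n + 1)]
    push_cast
    ring
  have hv2 : ∀ n : ℕ, cF2 (2 * n) = (2 * (n : ℂ) + 1) * (2 * (n : ℂ) + 2) * u (n + 1) := by
    intro n
    rw [hcF2]
    simp only [hv1 n]
    push_cast
    ring
  have hv3 : ∀ n : ℕ, cF3 (2 * n + 1)
      = (2 * (n : ℂ) + 2) * (2 * (n : ℂ) + 3) * (2 * (n : ℂ) + 4) * u (n + 2) := by
    intro n
    have h1 : 2 * n + 1 + 1 = 2 * (n + 1) := by omega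
    rw [hcF3]
    simp only [h1, hv2 (n + 1)]
    push_cast
    ring
  -- key hasSum
  have hKey : ∀ z : ℂ, HasSum (fun n : ℕ =>
      ((2 * (n : ℂ) - 2) * (2 * (n : ℂ) - 1) * (2 * (n : ℂ)) * u n
        + 6 * (2 * (n : ℂ) - 1) * (2 * (n : ℂ)) * u n
        + 6 * (2 * (n : ℂ)) * u n
        + (if n = 0 then 0 else 4 * b ^ 2 * (2 * (n : ℂ) - 2) * u (n - 1))
        + (-4) * lam * (2 * (n : ℂ)) * u n
        + (-(a ^ 2)) * (2 * (n : ℂ) + 2) * u (n + 1)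
        + (if n = 0 then 0 else 8 * b ^ 2 * u (n - 1))
        + (-4) * lam * u n) * z ^ (2 * n + 1)) 0 := by
    intro z
    have hOdd1 : HasSum (fun n : ℕ => cF1 (2 * n + 1) * z ^ (2 * n + 1)) (deriv Ff z) :=
      myOddSum (hFs1 z) hcF1even
    have hOdd3 : HasSum (fun n : ℕ => cF3 (2 * n + 1) * z ^ (2 * n + 1))
        (deriv (deriv (deriv Ff)) z) := myOddSum (hFs3 z) hcF3even
    have hEv2 : HasSum (fun n : ℕ => cF2 (2 * n) * z ^ (2 * n)) (deriv (deriv Ff) z) :=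
      myEvenSum (hFs2 z) hcF2odd
    have P1 : HasSum (fun n : ℕ =>
        ((2 * (n : ℂ) - 2) * (2 * (n : ℂ) - 1) * (2 * (n : ℂ)) * u n) * z ^ (2 * n + 1))
        (z ^ (2 * 2) * deriv (deriv (deriv Ff)) z) := by
      refine myShiftSum hOdd3 (fun n => ?_) (fun n hn => ?_)
      · rw [hv3 n]
        push_cast
        ring
      · interval_cases n <;> norm_num
    have base2 : HasSum (fun n : ℕ => (6 * cF2 (2 * n)) * z ^ (2 * n + 1))
        (6 * z * deriv (deriv Ff) z) := by
      refine HasSum.congr_fun (hEv2.mul_left (6 * z)) fun n => ?_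
      ring
    have P2 : HasSum (fun n : ℕ =>
        (6 * (2 * (n : ℂ) - 1) * (2 * (n : ℂ)) * u n) * z ^ (2 * n + 1))
        (z ^ (2 * 1) * (6 * z * deriv (deriv Ff) z)) := by
      refine myShiftSum base2 (fun n => ?_) (fun n hn => ?_)
      · rw [hv2 n]
        push_cast
        ring
      · interval_cases n <;> norm_num
    have base3 : HasSum (fun n : ℕ => (6 * cF1 (2 * n + 1)) * z ^ (2 * n + 1))
        (6 * deriv Ff z) := by
      refine HasSum.congr_fun (hOdd1.mul_left 6) fun n => ?_
      ring
    have P3 : HasSum (fun n : ℕ => (6 * (2 * (n : ℂ)) * u n) * z ^ (2 * n + 1))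
        (z ^ (2 * 1) * (6 * deriv Ff z)) := by
      refine myShiftSum base3 (fun n => ?_) (fun n hn => ?_)
      · rw [hv1 n]
        push_cast
        ring
      · interval_cases n <;> norm_num
    have base4 : HasSum (fun n : ℕ => ((4 * b ^ 2) * cF1 (2 * n + 1)) * z ^ (2 * n + 1))
        ((4 * b ^ 2) * deriv Ff z) := by
      refine HasSum.congr_fun (hOdd1.mul_left (4 * b ^ 2)) fun n => ?_
      ring
    have P4 : HasSum (fun n : ℕ =>
        (if n = 0 then 0 else 4 * b ^ 2 * (2 * (n : ℂ) - 2) * u (n - 1)) * z ^ (2 * n + 1))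
        (z ^ (2 * 2) * ((4 * b ^ 2) * deriv Ff z)) := by
      refine myShiftSum base4 (fun n => ?_) (fun n hn => ?_)
      · rw [if_neg (by omega : ¬ n + 2 = 0), hv1 n]
        have h1 : n + 2 - 1 = n + 1 := by omega
        rw [h1]
        push_cast
        ring
      · interval_cases n <;> norm_num
    have base5 : HasSum (fun n : ℕ => ((-(4 * lam)) * cF1 (2 * n + 1)) * z ^ (2 * n + 1))
        ((-(4 * lam)) * deriv Ff z) := by
      refine HasSum.congr_fun (hOdd1.mul_left (-(4 * lam))) fun n => ?_
      ring
    have P5 : HasSum (fun n : ℕ =>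
        ((-4) * lam * (2 * (n : ℂ)) * u n) * z ^ (2 * n + 1))
        (z ^ (2 * 1) * ((-(4 * lam)) * deriv Ff z)) := by
      refine myShiftSum base5 (fun n => ?_) (fun n hn => ?_)
      · rw [hv1 n]
        push_cast
        ring
      · interval_cases n <;> norm_num
    have P6 : HasSum (fun n : ℕ =>
        ((-(a ^ 2)) * (2 * (n : ℂ) + 2) * u (n + 1)) * z ^ (2 * n + 1))
        ((-(a ^ 2)) * deriv Ff z) := by
      refine HasSum.congr_fun (hOdd1.mul_left (-(a ^ 2))) fun n => ?_
      rw [hv1 n]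
      ring
    have base7 : HasSum (fun n : ℕ => (8 * b ^ 2 * u n) * z ^ (2 * n + 1))
        (8 * b ^ 2 * z * (f z * f (-z))) := by
      refine HasSum.congr_fun ((hu z).mul_left (8 * b ^ 2 * z)) fun n => ?_
      ring
    have P7 : HasSum (fun n : ℕ =>
        (if n = 0 then 0 else 8 * b ^ 2 * u (n - 1)) * z ^ (2 * n + 1))
        (z ^ (2 * 1) * (8 * b ^ 2 * z * (f z * f (-z)))) := by
      refine myShiftSum base7 (fun n => ?_) (fun n hn => ?_)
      · rw [if_neg (by omega : ¬ n + 1 = 0)]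
        have h1 : n + 1 - 1 = n := by omega
        rw [h1]
      · interval_cases n <;> norm_num
    have P8 : HasSum (fun n : ℕ => ((-4) * lam * u n) * z ^ (2 * n + 1))
        ((-(4 * lam)) * z * (f z * f (-z))) := by
      refine HasSum.congr_fun ((hu z).mul_left ((-(4 * lam)) * z)) fun n => ?_
      ring
    have Total := ((((((P1.add P2).add P3).add P4).add P5).add P6).add P7).add P8
    have hT : z ^ (2 * 2) * deriv (deriv (deriv Ff)) z + z ^ (2 * 1) * (6 * z * deriv (deriv Ff) z)
        + z ^ (2 * 1) * (6 * deriv Ff z) + z ^ (2 * 2) * ((4 * b ^ 2) * deriv Ff z)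
        + z ^ (2 * 1) * ((-(4 * lam)) * deriv Ff z) + (-(a ^ 2)) * deriv Ff z
        + z ^ (2 * 1) * (8 * b ^ 2 * z * (f z * f (-z)))
        + (-(4 * lam)) * z * (f z * f (-z)) = 0 := by
      linear_combination hHz z
    rw [hT] at Total
    refine HasSum.congr_fun Total fun n => ?_
    ring
  -- coefficients vanish
  set P : ℕ → ℂ := fun n =>
      (2 * (n : ℂ) - 2) * (2 * (n : ℂ) - 1) * (2 * (n : ℂ)) * u n
        + 6 * (2 * (n : ℂ) - 1) * (2 * (n : ℂ)) * u n
        + 6 * (2 * (n : ℂ)) * u n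
        + (if n = 0 then 0 else 4 * b ^ 2 * (2 * (n : ℂ) - 2) * u (n - 1))
        + (-4) * lam * (2 * (n : ℂ)) * u n
        + (-(a ^ 2)) * (2 * (n : ℂ) + 2) * u (n + 1)
        + (if n = 0 then 0 else 8 * b ^ 2 * u (n - 1))
        + (-4) * lam * u n with hPdef
  have hPad : ∀ z : ℂ, HasSum (fun m : ℕ => (if m % 2 = 1 then P (m / 2) else 0) * z ^ m) 0 :=
    fun z => mySpreadOdd (hKey z)
  have hPzero : ∀ n : ℕ, P n = 0 := by
    intro n
    have h0 := myCoeffZero hPad (2 * n + 1)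
    have h1 : (2 * n + 1) % 2 = 1 := by omega
    have h2 : (2 * n + 1) / 2 = n := by omega
    rw [h1, h2] at h0
    simpa using h0
  -- conclude
  intro n
  have hP := hPzero n
  rw [hPdef] at hP
  simp only at hP
  cases n with
  | zero =>
    norm_num at hP ⊢
    linear_combination (-(1 : ℂ) / 4) * hP
  | succ m =>
    rw [if_neg (by omega : ¬ m + 1 = 0)] at hP
    rw [if_neg (by omega : ¬ m + 1 = 0)]
    have h1 : m + 1 - 1 = m := by omega
    rw [h1] at hP
    have hne : (2 * ((m : ℂ) + 1) + 1) ≠ 0 := by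
      have : ((2 * m + 3 : ℕ) : ℂ) ≠ 0 := Nat.cast_ne_zero.mpr (by omega)
      push_cast at this
      convert this using 1
      ring
    push_cast at hP ⊢
    have hne' : ((m : ℂ) + 1) * 2 + 1 ≠ 0 := by rw [mul_comm]; exact hne
    field_simp
    linear_combination (-(1 : ℂ) / 2) * hP
end

section
/- Let a, b be nonzero complex numbers, κ > 0, and set κ₊ = κ e^{iπ/4}, κ₋ = κ e^{-iπ/4}. Suppose F is an entire function satisfying z e^{a/(2z)} F(z) = κ₊ e^{-ibz} F(i a/(2bz)) + κ₋ e^{ibz} F(-i a/(2bz)) for all z ∈ ℂ*. Then for all z ∈ ℂ*, -z² F(z) F(-z) = κ² [ e^{-2ibz} F(ia/(2bz))² + e^{2ibz} F(-ia/(2bz))² ]. -/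
open Complex

/-- If entire `F` satisfies the functional equation with `κ₊ = κe^{iπ/4}`, `κ₋ = κe^{-iπ/4}`,
`κ > 0`, then `-z²F(z)F(-z) = κ²(e^{-2ibz}F(ia/(2bz))² + e^{2ibz}F(-ia/(2bz))²)` on `ℂ*`. -/
theorem stmt11 (a b : ℂ) (ha : a ≠ 0) (hb : b ≠ 0) (κ : ℝ) (hκ : 0 < κ)
    (κp κm : ℂ) (hκp : κp = κ * Complex.exp (Complex.I * Real.pi / 4))
    (hκm : κm = κ * Complex.exp (-(Complex.I * Real.pi / 4)))
    (F : ℂ → ℂ) (hF : Differentiable ℂ F)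
    (hfe : ∀ z : ℂ, z ≠ 0 →
      z * Complex.exp (a / (2 * z)) * F z =
        κp * Complex.exp (-(Complex.I * b * z)) * F (Complex.I * a / (2 * b * z)) +
          κm * Complex.exp (Complex.I * b * z) * F (-(Complex.I * a / (2 * b * z)))) :
    ∀ z : ℂ, z ≠ 0 →
      -(z ^ 2) * F z * F (-z) =
        (κ : ℂ) ^ 2 *
          (Complex.exp (-(2 * Complex.I * b * z)) * F (Complex.I * a / (2 * b * z)) ^ 2 +
            Complex.exp (2 * Complex.I * b * z) * F (-(Complex.I * a / (2 * b * z))) ^ 2) := by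
  intro z hz
  have hz' : (-z) ≠ 0 := neg_ne_zero.mpr hz
  have e1 := hfe z hz
  have e2 := hfe (-z) hz'
  have harg1 : Complex.I * a / (2 * b * -z) = -(Complex.I * a / (2 * b * z)) := by
    field_simp
  have harg2 : -(Complex.I * a / (2 * b * -z)) = Complex.I * a / (2 * b * z) := by
    rw [harg1, neg_neg]
  have harg3 : a / (2 * -z) = -(a / (2 * z)) := by field_simp
  have h4 : -(Complex.I * b * -z) = Complex.I * b * z := by ring
  have h5 : Complex.I * b * -z = -(Complex.I * b * z) := by ring
  rw [harg1, neg_neg, harg3, h4, h5] at e2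
  set E : ℂ := Complex.exp (a / (2 * z)) with hE
  set A : ℂ := Complex.exp (-(Complex.I * b * z)) with hA
  set B : ℂ := Complex.exp (Complex.I * b * z) with hB
  set P : ℂ := F (Complex.I * a / (2 * b * z)) with hP
  set Q : ℂ := F (-(Complex.I * a / (2 * b * z))) with hQ
  have hEE : E * Complex.exp (-(a / (2 * z))) = 1 := by
    rw [hE, ← Complex.exp_add]; simp
  have hAB : A * B = 1 := by rw [hA, hB, ← Complex.exp_add]; simp
  have hA2 : A * A = Complex.exp (-(2 * Complex.I * b * z)) := by
    rw [hA, ← Complex.exp_add]; ring_nf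
  have hB2 : B * B = Complex.exp (2 * Complex.I * b * z) := by
    rw [hB, ← Complex.exp_add]; ring_nf
  have hexp1 : Complex.exp (Complex.I * Real.pi / 4) *
      Complex.exp (-(Complex.I * Real.pi / 4)) = 1 := by
    rw [← Complex.exp_add]; simp
  have hκ2 : κp * κm = (κ : ℂ) ^ 2 := by
    rw [hκp, hκm]; linear_combination ((κ : ℂ) ^ 2) * hexp1
  have hsq1 : Complex.exp (Complex.I * Real.pi / 4) ^ 2 = Complex.I := by
    rw [sq, ← Complex.exp_add]
    have : Complex.I * Real.pi / 4 + Complex.I * Real.pi / 4 =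
        (Real.pi / 2 : ℂ) * Complex.I := by push_cast; ring
    rw [this, Complex.exp_mul_I]
    push_cast
    rw [Complex.cos_pi_div_two, Complex.sin_pi_div_two]
    ring
  have hsq2 : Complex.exp (-(Complex.I * Real.pi / 4)) ^ 2 = -Complex.I := by
    rw [sq, ← Complex.exp_add]
    have : -(Complex.I * Real.pi / 4) + -(Complex.I * Real.pi / 4) =
        (-(Real.pi / 2) : ℂ) * Complex.I := by push_cast; ring
    rw [this, Complex.exp_mul_I]
    push_cast
    rw [Complex.cos_neg, Complex.sin_neg, Complex.cos_pi_div_two, Complex.sin_pi_div_two]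
    ring
  have hκ0 : κp ^ 2 + κm ^ 2 = 0 := by
    rw [hκp, hκm, mul_pow, mul_pow, hsq1, hsq2]; ring
  have step1 : -(z ^ 2) * F z * F (-z) =
      (κp * A * P + κm * B * Q) * (κp * B * Q + κm * A * P) := by
    rw [← e1, ← e2]
    linear_combination (z ^ 2 * F z * F (-z)) * hEE
  rw [step1]
  linear_combination (A * B * P * Q) * hκ0 + (A * A * P ^ 2 + B * B * Q ^ 2) * hκ2 +
    ((κ : ℂ) ^ 2 * P ^ 2) * hA2 + ((κ : ℂ) ^ 2 * Q ^ 2) * hB2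
end

section
/- Let (t_n)_{n≥1} be a strictly increasing sequence of positive reals with Σ_n 1/t_n² < ∞ and such that L = Σ_{n≥1} (-1)ⁿ/t_n converges. Let C > 0 and suppose that ψ(z) Θ(z) = -1/(4Cz) holds for 0 < |z| < t₁, where ψ(z) = Π_{n≥1} (1 - z²/t_n²) and Θ(z) = -1/(4Cz) + (z/2) Σ_{n≥1} (-1)ⁿ (1/(t_n - z) + 1/(t_n + z)). Then Σ_{n≥1} 1/t_n² = -4C Σ_{n≥1} (-1)ⁿ/t_n. -/
open Filter

section AuxStmt16

lemma aux_prod_sub_one (a : ℕ → ℂ) (N : ℕ) :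
    ‖(∏ n ∈ Finset.range N, (1 + a n)) - 1‖ ≤
      (∏ n ∈ Finset.range N, (1 + ‖a n‖)) - 1 := by
  induction N with
  | zero => simp
  | succ N ih =>
    have hQ : (1:ℝ) ≤ ∏ n ∈ Finset.range N, (1 + ‖a n‖) := by
      have := Finset.prod_le_prod (s := Finset.range N) (f := fun _ => (1:ℝ))
        (g := fun n => 1 + ‖a n‖) (fun i _ => zero_le_one)
        (fun i _ => le_add_of_nonneg_right (norm_nonneg _))
      simpa using this
    rw [Finset.prod_range_succ, Finset.prod_range_succ]
    have : (∏ n ∈ Finset.range N, (1 + a n)) * (1 + a N) - 1 =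
        ((∏ n ∈ Finset.range N, (1 + a n)) - 1) * (1 + a N) + a N := by ring
    rw [this]
    calc ‖((∏ n ∈ Finset.range N, (1 + a n)) - 1) * (1 + a N) + a N‖
        ≤ ‖(∏ n ∈ Finset.range N, (1 + a n)) - 1‖ * ‖(1 + a N)‖ + ‖a N‖ := by
          refine (norm_add_le _ _).trans ?_
          rw [norm_mul]
      _ ≤ ((∏ n ∈ Finset.range N, (1 + ‖a n‖)) - 1) * (1 + ‖a N‖) + ‖a N‖ :=
          add_le_add_left (mul_le_mul ih (by simpa using norm_add_le 1 (a N))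
            (norm_nonneg _) (by linarith)) _
      _ = (∏ n ∈ Finset.range N, (1 + ‖a n‖)) * (1 + ‖a N‖) - 1 := by ring

lemma aux_prod_sub_one_sub_sum (a : ℕ → ℂ) (N : ℕ) :
    ‖(∏ n ∈ Finset.range N, (1 + a n)) - 1 - ∑ n ∈ Finset.range N, a n‖ ≤
      (∏ n ∈ Finset.range N, (1 + ‖a n‖)) - 1 - ∑ n ∈ Finset.range N, ‖a n‖ := by
  induction N with
  | zero => simp
  | succ N ih =>
    rw [Finset.prod_range_succ, Finset.prod_range_succ, Finset.sum_range_succ,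
      Finset.sum_range_succ]
    have : (∏ n ∈ Finset.range N, (1 + a n)) * (1 + a N) - 1 -
        ((∑ n ∈ Finset.range N, a n) + a N) =
        ((∏ n ∈ Finset.range N, (1 + a n)) - 1 - ∑ n ∈ Finset.range N, a n) +
          a N * ((∏ n ∈ Finset.range N, (1 + a n)) - 1) := by ring
    rw [this]
    calc ‖_ + a N * ((∏ n ∈ Finset.range N, (1 + a n)) - 1)‖
        ≤ ‖(∏ n ∈ Finset.range N, (1 + a n)) - 1 - ∑ n ∈ Finset.range N, a n‖ +
            ‖a N‖ * ‖(∏ n ∈ Finset.range N, (1 + a n)) - 1‖ := by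
          refine (norm_add_le _ _).trans ?_
          rw [norm_mul]
      _ ≤ ((∏ n ∈ Finset.range N, (1 + ‖a n‖)) - 1 - ∑ n ∈ Finset.range N, ‖a n‖) +
            ‖a N‖ * ((∏ n ∈ Finset.range N, (1 + ‖a n‖)) - 1) := by
          gcongr
          exact aux_prod_sub_one a N
      _ = (∏ n ∈ Finset.range N, (1 + ‖a n‖)) * (1 + ‖a N‖) - 1 -
            ((∑ n ∈ Finset.range N, ‖a n‖) + ‖a N‖) := by ring

lemma aux_prod_le_exp (b : ℕ → ℝ) (hb : ∀ n, 0 ≤ b n) (N : ℕ) :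
    (∏ n ∈ Finset.range N, (1 + b n)) ≤ Real.exp (∑ n ∈ Finset.range N, b n) := by
  rw [Real.exp_sum]
  exact Finset.prod_le_prod (fun i _ => by linarith [hb i])
    fun i _ => by linarith [Real.add_one_le_exp (b i)]

end AuxStmt16

set_option maxHeartbeats 2000000 in
/-- If `ψ(z)Θ(z) = -1/(4Cz)` for `0 < |z| < t₁`, where `ψ(z) = Π(1 - z²/tₙ²)` and
`Θ(z) = -1/(4Cz) + (z/2)Σ(-1)ⁿ(1/(tₙ-z) + 1/(tₙ+z))`, then
`Σ 1/tₙ² = -4C Σ(-1)ⁿ/tₙ`.  Here `t n` stands for `t_{n+1}`. -/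
theorem stmt16 (t : ℕ → ℝ) (hmono : StrictMono t) (hpos : ∀ n, 0 < t n)
    (hsq : Summable fun n => 1 / (t n) ^ 2) (L : ℝ)
    (hL : Tendsto (fun N : ℕ => ∑ n ∈ Finset.range N, (-1 : ℝ) ^ (n + 1) / t n)
      atTop (nhds L))
    (C : ℝ) (hC : 0 < C) (Θ : ℂ → ℂ)
    (hΘ : ∀ z : ℂ, z ≠ 0 → ‖z‖ < t 0 →
      Tendsto (fun N : ℕ => -1 / (4 * C * z) +
          (z / 2) * ∑ n ∈ Finset.range N,
            (-1 : ℂ) ^ (n + 1) * (1 / ((t n : ℂ) - z) + 1 / ((t n : ℂ) + z)))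
        atTop (nhds (Θ z)))
    (hψΘ : ∀ z : ℂ, z ≠ 0 → ‖z‖ < t 0 →
      (∏' n : ℕ, (1 - z ^ 2 / ((t n : ℂ)) ^ 2)) * Θ z = -1 / (4 * C * z)) :
    (∑' n : ℕ, 1 / (t n) ^ 2) = -4 * C * L := by
  set T : ℝ := ∑' n : ℕ, 1 / (t n) ^ 2 with hTdef
  have ht0 : 0 < t 0 := hpos 0
  have htn : ∀ n, t 0 ≤ t n := fun n => hmono.monotone (Nat.zero_le n)
  have hTpos : 0 < T :=
    Summable.tsum_pos hsq (fun n => by positivity) 0 (by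
      have := hpos 0; positivity)
  -- the sequence of evaluation points
  set x : ℕ → ℝ := fun k => t 0 / (k + 2) with hxdef
  have hx0 : ∀ k, 0 < x k := fun k => by positivity
  have hxhalf : ∀ k, x k ≤ t 0 / 2 := by
    intro k
    have h2 : (2:ℝ) ≤ (k:ℝ) + 2 := by
      have : (0:ℝ) ≤ (k:ℝ) := Nat.cast_nonneg k
      linarith
    exact div_le_div_of_nonneg_left ht0.le (by norm_num) h2
  have hxlt : ∀ k, x k < t 0 := fun k => (hxhalf k).trans_lt (by linarith)
  have hxto : Tendsto x atTop (nhds 0) := by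
    have h1 : Tendsto (fun k : ℕ => (k:ℝ) + 2) atTop atTop :=
      tendsto_atTop_add_const_right _ 2 tendsto_natCast_atTop_atTop
    simpa [hxdef] using Tendsto.div_atTop (tendsto_const_nhds (x := t 0)) h1
  set z : ℕ → ℂ := fun k => ((x k : ℝ) : ℂ) with hzdef
  have hz0 : ∀ k, z k ≠ 0 := fun k => by
    simp [hzdef, Complex.ofReal_eq_zero, (hx0 k).ne']
  have hznorm : ∀ k, ‖z k‖ = x k := fun k => by
    simp [hzdef, Complex.norm_real, abs_of_pos (hx0 k)]
  have hzlt : ∀ k, ‖z k‖ < t 0 := fun k => by rw [hznorm]; exact hxlt k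
  set P : ℕ → ℂ := fun k => ∏' n : ℕ, (1 - (z k) ^ 2 / ((t n : ℂ)) ^ 2) with hPdef
  set R : ℕ → ℂ := fun k =>
    ∑' n : ℕ, (-1 : ℂ) ^ (n + 1) * (1 / ((t n : ℂ) * ((t n : ℂ) ^ 2 - (z k) ^ 2))) with hRdef
  have htnne : ∀ n, ((t n : ℝ) : ℂ) ≠ 0 := fun n => by
    simp [Complex.ofReal_eq_zero, (hpos n).ne']
  have hfacts : ∀ k, ‖P k - 1 + (z k) ^ 2 * (T : ℂ)‖ ≤
      Real.exp ((x k) ^ 2 * T) - 1 - (x k) ^ 2 * T := by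
    intro k
    set a : ℕ → ℂ := fun n => -((z k) ^ 2 / ((t n : ℂ)) ^ 2) with hadef
    have hacast : ∀ n, a n = ((-(x k ^ 2 / t n ^ 2) : ℝ) : ℂ) := by
      intro n; rw [hadef, hzdef]; push_cast; ring
    have hna : ∀ n, ‖a n‖ = x k ^ 2 * (1 / t n ^ 2) := by
      intro n
      rw [hacast n, Complex.norm_real, Real.norm_eq_abs, abs_neg,
        abs_of_nonneg (by positivity)]
      ring
    have hsumna : Summable (fun n => ‖a n‖) := by
      simp only [hna]; exact hsq.mul_left (x k ^ 2)
    have htsumna : ∑' n, ‖a n‖ = x k ^ 2 * T := by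
      calc ∑' n, ‖a n‖ = ∑' n, x k ^ 2 * (1 / t n ^ 2) := by simp only [hna]
        _ = x k ^ 2 * T := by rw [tsum_mul_left, ← hTdef]
    have ha : Summable a := Summable.of_norm hsumna
    have hta : ∑' n, a n = -((z k) ^ 2) * (T : ℂ) := by
      calc ∑' n, a n = ∑' n, ((-(x k ^ 2 / t n ^ 2) : ℝ) : ℂ) := by simp only [hacast]
        _ = ((∑' n, -(x k ^ 2 / t n ^ 2) : ℝ) : ℂ) := (Complex.ofReal_tsum _).symm
        _ = -((z k) ^ 2) * (T : ℂ) := by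
            have h1 : ∑' n, -(x k ^ 2 / t n ^ 2) = -(x k ^ 2 * T) := by
              rw [tsum_neg]
              congr 1
              calc ∑' (n : ℕ), x k ^ 2 / t n ^ 2
                  = ∑' (n : ℕ), x k ^ 2 * (1 / t n ^ 2) := by
                    congr 1; funext n; ring
                _ = x k ^ 2 * T := by rw [tsum_mul_left, ← hTdef]
            rw [h1, hzdef]; push_cast; ring
    have hnale : ∀ n, ‖a n‖ ≤ 1 / 4 := by
      intro n
      rw [hna]
      have h1 : x k ^ 2 ≤ t 0 ^ 2 / 4 := by nlinarith [hxhalf k, hx0 k, ht0]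
      have h2 : t 0 ^ 2 ≤ t n ^ 2 := by nlinarith [htn n, ht0]
      have h3 : (0:ℝ) < t n ^ 2 := pow_pos (hpos n) 2
      rw [mul_one_div, div_le_iff₀ h3]
      nlinarith
    have hfne : ∀ n, (1 : ℂ) + a n ≠ 0 := by
      intro n h
      have h1 : a n = -1 := by linear_combination h
      have : ‖a n‖ = 1 := by rw [h1]; simp
      linarith [hnale n]
    have hlog : Summable (fun n => Complex.log (1 + a n)) := by
      refine Summable.of_norm_bounded (hsumna.mul_left (3/2)) ?_
      intro n
      exact Complex.norm_log_one_add_half_le_self (by linarith [hnale n])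
    have hm : Multipliable (fun n => (1 : ℂ) + a n) :=
      Complex.multipliable_of_summable_log hlog
    have hPeq : P k = ∏' n, (1 + a n) := by
      rw [hPdef]
      exact tprod_congr fun n => by rw [hadef]; ring
    have hprod : Tendsto (fun N => ∏ n ∈ Finset.range N, (1 + a n)) atTop
        (nhds (∏' n, (1 + a n))) := hm.hasProd.tendsto_prod_nat
    have hle : ∀ N, ‖(∏ n ∈ Finset.range N, (1 + a n)) - 1 - ∑ n ∈ Finset.range N, a n‖ ≤
        Real.exp (x k ^ 2 * T) - 1 - ∑ n ∈ Finset.range N, ‖a n‖ := by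
      intro N
      refine (aux_prod_sub_one_sub_sum a N).trans ?_
      have h1 := aux_prod_le_exp (fun n => ‖a n‖) (fun n => norm_nonneg _) N
      have h2 : ∑ n ∈ Finset.range N, ‖a n‖ ≤ x k ^ 2 * T := by
        rw [← htsumna]
        exact Summable.sum_le_tsum _ (fun i _ => norm_nonneg _) hsumna
      have h3 := Real.exp_le_exp.mpr h2
      linarith
    have hlim1 : Tendsto
        (fun N => ‖(∏ n ∈ Finset.range N, (1 + a n)) - 1 - ∑ n ∈ Finset.range N, a n‖)
        atTop (nhds ‖P k - 1 + (z k) ^ 2 * (T : ℂ)‖) := by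
      have hs := ha.hasSum.tendsto_sum_nat
      have h4 : Tendsto
          (fun N => (∏ n ∈ Finset.range N, (1 + a n)) - 1 - ∑ n ∈ Finset.range N, a n)
          atTop (nhds (P k - 1 + (z k) ^ 2 * (T : ℂ))) := by
        have h5 := (hprod.sub_const 1).sub hs
        rw [hta] at h5
        have h7 : P k - 1 + (z k) ^ 2 * (T : ℂ) =
            (∏' n, (1 + a n)) - 1 - (-(z k) ^ 2 * (T : ℂ)) := by rw [hPeq]; ring
        rw [h7]
        exact h5
      exact h4.norm
    have hlim2 : Tendsto
        (fun N => Real.exp (x k ^ 2 * T) - 1 - ∑ n ∈ Finset.range N, ‖a n‖)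
        atTop (nhds (Real.exp (x k ^ 2 * T) - 1 - x k ^ 2 * T)) := by
      have h6 := hsumna.hasSum.tendsto_sum_nat
      rw [htsumna] at h6
      exact tendsto_const_nhds.sub h6
    exact le_of_tendsto_of_tendsto' hlim1 hlim2 hle
  -- summability and bound for R
  have hRfacts : ∀ k,
      Summable (fun n => (-1 : ℂ) ^ (n + 1) * (1 / ((t n : ℂ) * ((t n : ℂ) ^ 2 - (z k) ^ 2)))) ∧
      ‖R k‖ ≤ 4 / (3 * t 0) * T := by
    intro k
    set b : ℕ → ℂ := fun n =>
      (-1 : ℂ) ^ (n + 1) * (1 / ((t n : ℂ) * ((t n : ℂ) ^ 2 - (z k) ^ 2))) with hbdef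
    have hdpos : ∀ n, 0 < t n ^ 2 - x k ^ 2 := by
      intro n
      have h1 : x k < t n := (hxlt k).trans_le (htn n)
      nlinarith [hx0 k]
    have hbcast : ∀ n, (1 : ℂ) / ((t n : ℂ) * ((t n : ℂ) ^ 2 - (z k) ^ 2)) =
        ((1 / (t n * (t n ^ 2 - x k ^ 2)) : ℝ) : ℂ) := by
      intro n; rw [hzdef]; push_cast; ring
    have hbnorm : ∀ n, ‖b n‖ ≤ 4 / (3 * t 0) * (1 / t n ^ 2) := by
      intro n
      have h34 : (3 / 4 : ℝ) * t n ^ 2 ≤ t n ^ 2 - x k ^ 2 := by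
        have h1 : x k ^ 2 ≤ t 0 ^ 2 / 4 := by nlinarith [hxhalf k, hx0 k, ht0]
        have h2 : t 0 ^ 2 ≤ t n ^ 2 := by nlinarith [htn n, ht0]
        nlinarith
      have hApos : (0 : ℝ) < t n * (t n ^ 2 - x k ^ 2) :=
        mul_pos (hpos n) (hdpos n)
      have hnormb : ‖b n‖ = 1 / (t n * (t n ^ 2 - x k ^ 2)) := by
        rw [hbdef]
        simp only []
        rw [norm_mul, hbcast n, Complex.norm_real, Real.norm_eq_abs,
          abs_of_pos (one_div_pos.mpr hApos), norm_pow, norm_neg, norm_one, one_pow, one_mul]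
      rw [hnormb]
      have hrhs : 4 / (3 * t 0) * (1 / t n ^ 2) = 4 / (3 * t 0 * t n ^ 2) := by
        field_simp
      rw [hrhs, div_le_div_iff₀ hApos (by have := ht0; have := hpos n; positivity)]
      nlinarith [mul_le_mul_of_nonneg_left h34 (by linarith [hpos n] : (0:ℝ) ≤ 4 * t n),
        mul_le_mul_of_nonneg_right (htn n) (sq_nonneg (t n))]
    have hbsum : Summable b :=
      Summable.of_norm_bounded (hsq.mul_left (4 / (3 * t 0))) hbnorm
    refine ⟨hbsum, ?_⟩
    have hbsumnorm : Summable (fun n => ‖b n‖) :=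
      Summable.of_nonneg_of_le (fun n => norm_nonneg _) hbnorm (hsq.mul_left (4 / (3 * t 0)))
    calc ‖R k‖ ≤ ∑' n, ‖b n‖ := by
          rw [hRdef]; exact norm_tsum_le_tsum_norm hbsumnorm
      _ ≤ ∑' n, 4 / (3 * t 0) * (1 / t n ^ 2) :=
          Summable.tsum_le_tsum hbnorm hbsumnorm (hsq.mul_left (4 / (3 * t 0)))
      _ = 4 / (3 * t 0) * T := by rw [tsum_mul_left, ← hTdef]
  -- the closed form for Θ at z k
  have hΘeq : ∀ k, Θ (z k) =
      -1 / (4 * C * z k) + z k * L + (z k) ^ 3 * R k := by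
    intro k
    set b : ℕ → ℂ := fun n =>
      (-1 : ℂ) ^ (n + 1) * (1 / ((t n : ℂ) * ((t n : ℂ) ^ 2 - (z k) ^ 2))) with hbdef
    have hbsum : Summable b := (hRfacts k).1
    have htza : ∀ n, (t n : ℂ) - z k ≠ 0 := by
      intro n
      rw [hzdef]
      simp only []
      rw [← Complex.ofReal_sub, Complex.ofReal_ne_zero]
      have : x k < t n := (hxlt k).trans_le (htn n)
      linarith
    have htzb : ∀ n, (t n : ℂ) + z k ≠ 0 := by
      intro n
      rw [hzdef]
      simp only []
      rw [← Complex.ofReal_add, Complex.ofReal_ne_zero]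
      have := hx0 k; have := hpos n
      linarith
    have hterm : ∀ n, (-1 : ℂ) ^ (n + 1) * (1 / ((t n : ℂ) - z k) + 1 / ((t n : ℂ) + z k)) =
        2 * ((-1 : ℂ) ^ (n + 1) * (1 / (t n : ℂ))) + 2 * (z k) ^ 2 * b n := by
      intro n
      rw [hbdef]
      simp only []
      have h1 := htza n; have h2 := htzb n; have h3 := htnne n
      have h4 : (t n : ℂ) ^ 2 - (z k) ^ 2 = ((t n : ℂ) - z k) * ((t n : ℂ) + z k) := by ring
      have h5 : (t n : ℂ) ^ 2 - (z k) ^ 2 ≠ 0 := by rw [h4]; exact mul_ne_zero h1 h2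
      field_simp
      ring
    have hsumeq : ∀ N, ∑ n ∈ Finset.range N,
        (-1 : ℂ) ^ (n + 1) * (1 / ((t n : ℂ) - z k) + 1 / ((t n : ℂ) + z k)) =
        2 * ((∑ n ∈ Finset.range N, (-1 : ℝ) ^ (n + 1) / t n : ℝ) : ℂ) +
          2 * (z k) ^ 2 * ∑ n ∈ Finset.range N, b n := by
      intro N
      rw [Finset.sum_congr rfl fun n _ => hterm n, Finset.sum_add_distrib,
        ← Finset.mul_sum, ← Finset.mul_sum]
      congr 2
      push_cast
      exact Finset.sum_congr rfl fun i _ => mul_one_div _ _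
    have hconv : Tendsto (fun N : ℕ => -1 / (4 * C * z k) +
        (z k) / 2 * ∑ n ∈ Finset.range N,
          (-1 : ℂ) ^ (n + 1) * (1 / ((t n : ℂ) - z k) + 1 / ((t n : ℂ) + z k)))
        atTop (nhds (-1 / (4 * C * z k) +
          (z k) / 2 * (2 * (L : ℂ) + 2 * (z k) ^ 2 * R k))) := by
      refine tendsto_const_nhds.add (Tendsto.const_mul _ ?_)
      have h2 : Tendsto (fun N : ℕ =>
          2 * ((∑ n ∈ Finset.range N, (-1 : ℝ) ^ (n + 1) / t n : ℝ) : ℂ) +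
            2 * (z k) ^ 2 * ∑ n ∈ Finset.range N, b n)
          atTop (nhds (2 * (L : ℂ) + 2 * (z k) ^ 2 * R k)) := by
        refine Tendsto.add (Tendsto.const_mul _ ?_) (Tendsto.const_mul _ ?_)
        · exact (Complex.continuous_ofReal.tendsto L).comp hL
        · rw [hRdef]
          exact hbsum.hasSum.tendsto_sum_nat
      exact h2.congr fun N => (hsumeq N).symm
    have := tendsto_nhds_unique (hΘ (z k) (hz0 k) (hzlt k)) hconv
    rw [this]
    ring
  -- the key algebraic identity
  have hkey : ∀ k, (P k - 1) / (z k) ^ 2 =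
      4 * C * P k * ((L : ℂ) + (z k) ^ 2 * R k) := by
    intro k
    have h := hψΘ (z k) (hz0 k) (hzlt k)
    have h' : P k * Θ (z k) = -1 / (4 * C * z k) := h
    rw [hΘeq k] at h'
    have hz2 : (z k) ^ 2 ≠ 0 := pow_ne_zero _ (hz0 k)
    have hCne : (C : ℂ) ≠ 0 := Complex.ofReal_ne_zero.mpr hC.ne'
    have hzne : z k ≠ 0 := hz0 k
    field_simp at h'
    field_simp
    linear_combination -h'
  -- limit computations
  have hx2T : Tendsto (fun k => x k ^ 2 * T) atTop (nhds 0) := by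
    have h1 := (hxto.mul hxto).mul_const T
    simpa [pow_two] using h1
  have hslope : Tendsto
      (fun k => (Real.exp (x k ^ 2 * T) - 1 - x k ^ 2 * T) / (x k ^ 2)) atTop (nhds 0) := by
    have hd : HasDerivAt (fun y => Real.exp y - 1 - y) 0 0 := by
      have h1 := ((Real.hasDerivAt_exp 0).sub_const 1).sub (hasDerivAt_id 0)
      simp at h1; exact h1
    have hs := hasDerivAt_iff_tendsto_slope.mp hd
    have hy : Tendsto (fun k => x k ^ 2 * T) atTop (nhdsWithin (0:ℝ) {(0:ℝ)}ᶜ) := by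
      rw [tendsto_nhdsWithin_iff]
      refine ⟨hx2T, Eventually.of_forall fun k => ?_⟩
      simp only [Set.mem_compl_iff, Set.mem_singleton_iff]
      exact mul_ne_zero (pow_ne_zero 2 (hx0 k).ne') hTpos.ne'
    have hcomp := hs.comp hy
    have h2 := hcomp.const_mul T
    rw [mul_zero] at h2
    refine h2.congr fun k => ?_
    rw [Function.comp_apply, slope_def_field]
    have hxne : x k ≠ 0 := (hx0 k).ne'
    have hTne : T ≠ 0 := hTpos.ne'
    simp only [sub_zero, Real.exp_zero]
    field_simp
    ring
  have hPdiv : Tendsto (fun k => (P k - 1) / (z k) ^ 2) atTop (nhds (-(T : ℂ))) := by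
    rw [← tendsto_sub_nhds_zero_iff]
    refine squeeze_zero_norm (a := fun k =>
      (Real.exp (x k ^ 2 * T) - 1 - x k ^ 2 * T) / (x k ^ 2)) (fun k => ?_) hslope
    have hzk2 : (z k) ^ 2 ≠ 0 := pow_ne_zero _ (hz0 k)
    have h1 : (P k - 1) / (z k) ^ 2 - (-(T : ℂ)) =
        (P k - 1 + (T : ℂ) * (z k) ^ 2) / (z k) ^ 2 := by
      rw [sub_neg_eq_add, div_add' _ _ _ hzk2]
    rw [h1, norm_div, norm_pow, hznorm, mul_comm ((T : ℂ)) ((z k) ^ 2)]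
    have hx2pos : (0:ℝ) < x k ^ 2 := pow_pos (hx0 k) 2
    exact (div_le_div_iff_of_pos_right hx2pos).mpr (hfacts k)
  have hzto : Tendsto z atTop (nhds 0) := by
    have h1 := (Complex.continuous_ofReal.tendsto 0).comp hxto
    rw [Complex.ofReal_zero] at h1; exact h1
  have hz2to : Tendsto (fun k => (z k) ^ 2) atTop (nhds 0) := by
    have h1 := hzto.mul hzto
    rw [mul_zero] at h1
    exact h1.congr fun k => (pow_two (z k)).symm
  have hP1 : Tendsto P atTop (nhds 1) := by
    rw [show (1:ℂ) = 0 + 1 by ring]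
    have h1 := hz2to.mul hPdiv
    rw [zero_mul] at h1
    have h2 : ∀ k, (z k) ^ 2 * ((P k - 1) / (z k) ^ 2) = P k - 1 := by
      intro k
      have hzk2 : (z k) ^ 2 ≠ 0 := pow_ne_zero _ (hz0 k)
      field_simp
      exact mul_div_cancel_left₀ _ (hz0 k)
    have h3 : Tendsto (fun k => P k - 1) atTop (nhds 0) := h1.congr h2
    simpa using h3.add_const 1
  have hzRto : Tendsto (fun k => (z k) ^ 2 * R k) atTop (nhds 0) := by
    refine squeeze_zero_norm (a := fun k => x k ^ 2 * (4 / (3 * t 0) * T)) (fun k => ?_) ?_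
    · rw [norm_mul, norm_pow, hznorm]
      exact mul_le_mul_of_nonneg_left (hRfacts k).2 (by positivity)
    · have h1 := (hxto.mul hxto).mul_const (4 / (3 * t 0) * T)
      simpa [pow_two] using h1
  have hRHS : Tendsto (fun k => 4 * (C : ℂ) * P k * ((L : ℂ) + (z k) ^ 2 * R k))
      atTop (nhds (4 * (C : ℂ) * (L : ℂ))) := by
    have h1 := (hP1.const_mul (4 * (C : ℂ))).mul (hzRto.const_add (L : ℂ))
    simpa using h1
  have hfinal : -(T : ℂ) = 4 * (C : ℂ) * (L : ℂ) :=
    tendsto_nhds_unique (hPdiv.congr fun k => hkey k) hRHS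
  have hreal : -T = 4 * C * L := by exact_mod_cast hfinal
  linarith
end

section
/- Let b > 0 and let f, g, h be entire functions such that z f(z) = e^{ibz} g(1/z) + e^{-ibz} h(1/z) for all z ∈ ℂ*, and assume the restriction of f to ℝ is integrable. Then the Fourier transform f̂(ξ) = ∫_ℝ f(x) e^{-iξx} dx vanishes for all real ξ with |ξ| > b. -/
open Complex MeasureTheory Filter Topology Set intervalIntegral

private lemma norm_cexp_eq (c : ℝ) (z : ℂ) :
    ‖Complex.exp (Complex.I * c * z)‖ = Real.exp (-(c * z.im)) := by
  rw [Complex.norm_exp]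
  congr 1
  simp [Complex.mul_re, Complex.mul_im]

private lemma key (b ξ : ℝ) (hb : 0 < b) (hξ : b < ξ) (f g h : ℂ → ℂ)
    (hf : Differentiable ℂ f) (hg : Differentiable ℂ g) (hh : Differentiable ℂ h)
    (hdec : ∀ z : ℂ, z ≠ 0 →
      z * f z = Complex.exp (Complex.I * b * z) * g (1 / z) +
        Complex.exp (-(Complex.I * b * z)) * h (1 / z))
    (hint : Integrable (fun x : ℝ => f x)) :
    ∫ x : ℝ, f x * Complex.exp (-(Complex.I * ξ * x)) = 0 := by
  set ε : ℝ := ξ - b with hεdef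
  have hε : 0 < ε := sub_pos.2 hξ
  set φ : ℂ → ℂ := fun z => f z * Complex.exp (-(Complex.I * ξ * z)) with hφdef
  have hφ : Differentiable ℂ φ := by
    apply hf.mul
    apply Differentiable.cexp
    fun_prop
  -- bound on g, h on the closed unit ball
  obtain ⟨Mg, hMg⟩ := (isCompact_closedBall (0 : ℂ) 1).exists_bound_of_continuousOn
    hg.continuous.continuousOn
  obtain ⟨Mh, hMh⟩ := (isCompact_closedBall (0 : ℂ) 1).exists_bound_of_continuousOn
    hh.continuous.continuousOn
  set M : ℝ := max (max Mg Mh) 0 with hMdef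
  have hM0 : 0 ≤ M := le_max_right _ _
  have hMg' : ∀ w : ℂ, ‖w‖ ≤ 1 → ‖g w‖ ≤ M := fun w hw =>
    (hMg w (by simpa using hw)).trans ((le_max_left _ _).trans (le_max_left _ _))
  have hMh' : ∀ w : ℂ, ‖w‖ ≤ 1 → ‖h w‖ ≤ M := fun w hw =>
    (hMh w (by simpa using hw)).trans ((le_max_right _ _).trans (le_max_left _ _))
  -- the main pointwise bound in the lower half plane
  have hbound : ∀ z : ℂ, 1 ≤ ‖z‖ → z.im ≤ 0 →
      ‖φ z‖ ≤ 2 * M * Real.exp (ε * z.im) / ‖z‖ := by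
    intro z hz1 hzim
    have hz : z ≠ 0 := by
      intro h0; rw [h0, norm_zero] at hz1; linarith
    have hznorm : (0:ℝ) < ‖z‖ := lt_of_lt_of_le one_pos hz1
    have hinv : ‖(1:ℂ) / z‖ ≤ 1 := by
      rw [norm_div, norm_one]
      exact div_le_one_of_le₀ hz1 (norm_nonneg _)
    have hid : z * φ z = Complex.exp (Complex.I * b * z) * g (1 / z) *
        Complex.exp (-(Complex.I * ξ * z)) +
        Complex.exp (-(Complex.I * b * z)) * h (1 / z) *
        Complex.exp (-(Complex.I * ξ * z)) := by
      have : z * φ z = (z * f z) * Complex.exp (-(Complex.I * ξ * z)) := by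
        rw [hφdef]; ring
      rw [this, hdec z hz]; ring
    have hnorm1 : ‖Complex.exp (Complex.I * b * z)‖ = Real.exp (-(b * z.im)) :=
      norm_cexp_eq b z
    have hnorm2 : ‖Complex.exp (-(Complex.I * b * z))‖ = Real.exp (b * z.im) := by
      have : -(Complex.I * (b:ℂ) * z) = Complex.I * ((-b : ℝ) : ℂ) * z := by
        push_cast; ring
      rw [this, norm_cexp_eq (-b) z]; ring_nf
    have hnorm3 : ‖Complex.exp (-(Complex.I * ξ * z))‖ = Real.exp (ξ * z.im) := by
      have : -(Complex.I * (ξ:ℂ) * z) = Complex.I * ((-ξ : ℝ) : ℂ) * z := by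
        push_cast; ring
      rw [this, norm_cexp_eq (-ξ) z]; ring_nf
    have hzφ : ‖z * φ z‖ ≤ 2 * M * Real.exp (ε * z.im) := by
      rw [hid]
      refine (norm_add_le _ _).trans ?_
      rw [norm_mul, norm_mul, norm_mul, norm_mul, hnorm1, hnorm2, hnorm3]
      have e1 : Real.exp (-(b * z.im)) * ‖g (1/z)‖ * Real.exp (ξ * z.im)
          ≤ Real.exp (ε * z.im) * M := by
        rw [show Real.exp (-(b * z.im)) * ‖g (1/z)‖ * Real.exp (ξ * z.im)
            = ‖g (1/z)‖ * (Real.exp (-(b * z.im)) * Real.exp (ξ * z.im)) by ring,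
          ← Real.exp_add]
        have : -(b * z.im) + ξ * z.im = ε * z.im := by rw [hεdef]; ring
        rw [this, mul_comm]
        exact mul_le_mul_of_nonneg_left (hMg' _ hinv) (Real.exp_nonneg _)
      have e2 : Real.exp (b * z.im) * ‖h (1/z)‖ * Real.exp (ξ * z.im)
          ≤ Real.exp (ε * z.im) * M := by
        rw [show Real.exp (b * z.im) * ‖h (1/z)‖ * Real.exp (ξ * z.im)
            = ‖h (1/z)‖ * (Real.exp (b * z.im) * Real.exp (ξ * z.im)) by ring,
          ← Real.exp_add]
        have hle : Real.exp (b * z.im + ξ * z.im) ≤ Real.exp (ε * z.im) := by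
          apply Real.exp_le_exp.2
          rw [hεdef]
          nlinarith
        calc ‖h (1/z)‖ * Real.exp (b * z.im + ξ * z.im)
            ≤ M * Real.exp (b * z.im + ξ * z.im) :=
              mul_le_mul_of_nonneg_right (hMh' _ hinv) (Real.exp_nonneg _)
          _ ≤ M * Real.exp (ε * z.im) := mul_le_mul_of_nonneg_left hle hM0
          _ = Real.exp (ε * z.im) * M := mul_comm _ _
      linarith
    rw [le_div_iff₀ hznorm]
    calc ‖φ z‖ * ‖z‖ = ‖z * φ z‖ := (mul_comm _ _).trans (norm_mul z (φ z)).symm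
      _ ≤ _ := hzφ
  -- integrability of φ on ℝ
  have hφint : Integrable (fun x : ℝ => φ x) := by
    apply hint.mono ((hφ.continuous.comp Complex.continuous_ofReal).aestronglyMeasurable)
    filter_upwards with x
    show ‖f x * Complex.exp (-(Complex.I * ξ * (x:ℂ)))‖ ≤ ‖f x‖
    rw [norm_mul]
    have : ‖Complex.exp (-(Complex.I * ξ * (x:ℂ)))‖ = 1 := by
      have : -(Complex.I * (ξ:ℂ) * (x:ℂ)) = Complex.I * ((-ξ : ℝ) : ℂ) * (x:ℂ) := by
        push_cast; ring
      rw [this, norm_cexp_eq (-ξ) x]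
      simp
    rw [this, mul_one]
  -- the four boundary pieces
  set T : ℝ → ℂ := fun R => ∫ x in (-R)..R, φ x with hTdef
  set B : ℝ → ℂ := fun R => ∫ x in (-R)..R, φ ((x:ℂ) + (-R : ℝ) * Complex.I) with hBdef
  set Sp : ℝ → ℂ := fun R => ∫ y in (-R)..(0:ℝ), φ ((R:ℝ) + (y:ℝ) * Complex.I) with hSpdef
  set Sm : ℝ → ℂ := fun R => ∫ y in (-R)..(0:ℝ), φ ((-R:ℝ) + (y:ℝ) * Complex.I) with hSmdef
  have rect : ∀ R : ℝ, T R = B R + Complex.I • Sp R - Complex.I • Sm R := by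
    intro R
    have := Complex.integral_boundary_rect_eq_zero_of_differentiableOn φ
      ⟨-R, -R⟩ ⟨R, 0⟩ hφ.differentiableOn
    have h1 : ∀ x : ℝ, (x : ℂ) + ((0:ℝ) : ℂ) * Complex.I = (x : ℂ) := by
      intro x; simp
    simp only [Complex.ofReal_neg] at this ⊢
    rw [hTdef, hBdef, hSpdef, hSmdef]
    simp only [Complex.ofReal_neg, h1] at this ⊢
    linear_combination -this
  -- limits
  have hT : Tendsto T atTop (𝓝 (∫ x : ℝ, φ x)) :=
    intervalIntegral_tendsto_integral hφint tendsto_neg_atTop_atBot tendsto_id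
  have hB : Tendsto B atTop (𝓝 0) := by
    apply squeeze_zero_norm' (a := fun R => 4 * M * Real.exp (ε * (-R)))
    · filter_upwards [eventually_ge_atTop (1:ℝ)] with R hR
      have hb' : ∀ x ∈ Set.uIoc (-R) R, ‖φ ((x:ℂ) + (-R : ℝ) * Complex.I)‖
          ≤ 2 * M * Real.exp (ε * (-R)) / R := by
        intro x hx
        set z : ℂ := (x:ℂ) + (-R : ℝ) * Complex.I with hzdef
        have him : z.im = -R := by simp [hzdef]
        have hnz : R ≤ ‖z‖ := by
          have := Complex.abs_im_le_norm z
          rw [him] at this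
          calc R = |(-R)| := by rw [abs_neg, _root_.abs_of_nonneg (by linarith)]
            _ ≤ ‖z‖ := this
        have h1z : 1 ≤ ‖z‖ := le_trans hR hnz
        have := hbound z h1z (by rw [him]; linarith)
        rw [him] at this
        refine this.trans ?_
        apply div_le_div_of_nonneg_left _ (by linarith) hnz
        positivity
      have := intervalIntegral.norm_integral_le_of_norm_le_const hb'
      rw [hBdef]
      refine this.trans ?_
      have habs2 : |R - (-R)| = 2 * R := by rw [_root_.abs_of_nonneg (by linarith)]; ring
      rw [habs2]
      have hR0 : (0:ℝ) < R := by linarith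
      have heq : 2 * M * Real.exp (ε * (-R)) / R * (2 * R) = 4 * M * Real.exp (ε * (-R)) := by
        field_simp
        ring
      rw [heq]
    · have : Tendsto (fun R : ℝ => ε * (-R)) atTop atBot := by
        apply Tendsto.const_mul_atBot hε
        exact tendsto_neg_atTop_atBot
      have := Real.tendsto_exp_atBot.comp this
      simpa using (this.const_mul (4 * M))
  have hSide : ∀ (S : ℝ → ℂ) (c : ℝ → ℝ),
      (∀ R : ℝ, 1 ≤ R → ∀ y ∈ Set.uIoc (-R) (0:ℝ), ‖φ ((c R : ℝ) + (y:ℝ) * Complex.I)‖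
        ≤ 2 * M * Real.exp (ε * y) / R) →
      (∀ R, S R = ∫ y in (-R)..(0:ℝ), φ ((c R : ℝ) + (y:ℝ) * Complex.I)) →
      Tendsto S atTop (𝓝 0) := by
    intro S c hSb hSeq
    apply squeeze_zero_norm' (a := fun R => 2 * M / (R * ε))
    · filter_upwards [eventually_ge_atTop (1:ℝ)] with R hR
      have hR0 : (0:ℝ) < R := by linarith
      have hgint : IntervalIntegrable (fun y => 2 * M * Real.exp (ε * y) / R)
          volume (-R) 0 := by
        apply Continuous.intervalIntegrable
        fun_prop
      have hb' := intervalIntegral.norm_integral_le_of_norm_le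
        (f := fun y : ℝ => φ ((c R : ℝ) + (y:ℝ) * Complex.I))
        (μ := volume) (a := -R) (b := 0)
        (by linarith) (Filter.Eventually.of_forall (fun t ht => hSb R hR t
          (by rw [Set.uIoc_of_le (by linarith)]; exact ht))) hgint
      rw [hSeq R]
      refine hb'.trans ?_
      have hcomp : ∫ y in (-R)..(0:ℝ), 2 * M * Real.exp (ε * y) / R
          = (2 * M / R) * ∫ y in (-R)..(0:ℝ), Real.exp (ε * y) := by
        rw [← intervalIntegral.integral_const_mul]
        congr 1; funext y; ring
      have hexp : ∫ y in (-R)..(0:ℝ), Real.exp (ε * y)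
          = ε⁻¹ * (1 - Real.exp (ε * (-R))) := by
        rw [intervalIntegral.integral_comp_mul_left (fun u => Real.exp u) (ne_of_gt hε)]
        simp [smul_eq_mul, mul_sub]
      rw [hcomp, hexp]
      have hle : (2 * M / R) * (ε⁻¹ * (1 - Real.exp (ε * (-R)))) ≤ 2 * M / (R * ε) := by
        have h2 : 2 * M / (R * ε) = (2 * M / R) * ε⁻¹ := by
          rw [← div_div, div_eq_mul_inv]
        rw [h2]
        have h3 : (0:ℝ) ≤ (2 * M / R) * ε⁻¹ := by positivity
        nlinarith [mul_nonneg h3 (Real.exp_nonneg (ε * (-R)))]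
      have habs : |(2 * M / R) * (ε⁻¹ * (1 - Real.exp (ε * (-R))))|
          = (2 * M / R) * (ε⁻¹ * (1 - Real.exp (ε * (-R)))) := by
        apply _root_.abs_of_nonneg
        have h5 : (0:ℝ) ≤ 1 - Real.exp (ε * (-R)) := by
          have : Real.exp (ε * (-R)) ≤ 1 := by
            apply Real.exp_le_one_iff.2
            nlinarith
          linarith
        exact mul_nonneg (by positivity) (mul_nonneg (by positivity) h5)
      exact hle
    · have h1 : Tendsto (fun R : ℝ => R * ε) atTop atTop :=
        Tendsto.atTop_mul_const hε tendsto_id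
      simpa using Tendsto.const_div_atTop h1 (2 * M)
  have hSp : Tendsto Sp atTop (𝓝 0) := by
    apply hSide Sp (fun R => R) ?_ (fun R => rfl)
    intro R hR y hy
    have hy0 : y ≤ 0 := by
      rw [Set.uIoc_of_le (by linarith : (-R:ℝ) ≤ 0)] at hy
      exact hy.2
    set z : ℂ := ((R:ℝ):ℂ) + (y:ℝ) * Complex.I with hz
    have him : z.im = y := by simp [hz]
    have hre : z.re = R := by simp [hz]
    have hnz : R ≤ ‖z‖ := by
      have h2 := Complex.abs_re_le_norm z
      rw [hre] at h2
      calc R = |R| := (_root_.abs_of_nonneg (by linarith)).symm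
        _ ≤ ‖z‖ := h2
    have h1z : 1 ≤ ‖z‖ := le_trans hR hnz
    have hbz := hbound z h1z (by rw [him]; linarith)
    rw [him] at hbz
    refine hbz.trans ?_
    apply div_le_div_of_nonneg_left _ (by linarith) hnz
    positivity
  have hSm : Tendsto Sm atTop (𝓝 0) := by
    apply hSide Sm (fun R => -R) ?_ (fun R => rfl)
    intro R hR y hy
    have hy0 : y ≤ 0 := by
      rw [Set.uIoc_of_le (by linarith : (-R:ℝ) ≤ 0)] at hy
      exact hy.2
    set z : ℂ := ((-R:ℝ):ℂ) + (y:ℝ) * Complex.I with hz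
    have him : z.im = y := by simp [hz]
    have hre : z.re = -R := by simp [hz]
    have hnz : R ≤ ‖z‖ := by
      have h2 := Complex.abs_re_le_norm z
      rw [hre] at h2
      calc R = |(-R)| := by rw [abs_neg, _root_.abs_of_nonneg (by linarith)]
        _ ≤ ‖z‖ := h2
    have h1z : 1 ≤ ‖z‖ := le_trans hR hnz
    have hbz := hbound z h1z (by rw [him]; linarith)
    rw [him] at hbz
    refine hbz.trans ?_
    apply div_le_div_of_nonneg_left _ (by linarith) hnz
    positivity
  have hzero : Tendsto T atTop (𝓝 0) := by
    have h0 : Tendsto (fun R => B R + Complex.I • Sp R - Complex.I • Sm R) atTop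
        (𝓝 ((0:ℂ) + Complex.I • 0 - Complex.I • 0)) :=
      Tendsto.sub (hB.add (hSp.const_smul Complex.I)) (hSm.const_smul Complex.I)
    simp only [smul_zero, add_zero, sub_zero] at h0
    exact (tendsto_congr rect).2 h0
  exact tendsto_nhds_unique hT hzero

/-- If entire `f`, integrable on `ℝ`, satisfies `z f(z) = e^{ibz}g(1/z) + e^{-ibz}h(1/z)`
on `ℂ*` with `g, h` entire and `b > 0`, then `f̂(ξ) = 0` for `|ξ| > b`. -/
theorem stmt17 (b : ℝ) (hb : 0 < b) (f g h : ℂ → ℂ)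
    (hf : Differentiable ℂ f) (hg : Differentiable ℂ g) (hh : Differentiable ℂ h)
    (hdec : ∀ z : ℂ, z ≠ 0 →
      z * f z = Complex.exp (Complex.I * b * z) * g (1 / z) +
        Complex.exp (-(Complex.I * b * z)) * h (1 / z))
    (hint : Integrable (fun x : ℝ => f x)) :
    ∀ ξ : ℝ, b < |ξ| →
      ∫ x : ℝ, f x * Complex.exp (-(Complex.I * ξ * x)) = 0 := by
  intro ξ hξ
  rcases lt_abs.mp hξ with hpos | hneg
  · exact key b ξ hb hpos f g h hf hg hh hdec hint
  · have hint' : Integrable (fun x : ℝ => f (-(x:ℂ))) := by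
      have h2 := hint.comp_neg
      simpa [Complex.ofReal_neg] using h2
    have key' := key b (-ξ) hb hneg (fun z => f (-z)) (fun w => -h (-w)) (fun w => -g (-w))
      (hf.comp differentiable_id.neg) ((hh.comp differentiable_id.neg).neg)
      ((hg.comp differentiable_id.neg).neg)
      (by
        intro z hz
        show z * f (-z) = Complex.exp (Complex.I * b * z) * -h (-(1 / z)) +
          Complex.exp (-(Complex.I * b * z)) * -g (-(1 / z))
        have hd := hdec (-z) (neg_ne_zero.2 hz)
        have h1 : (1:ℂ) / (-z) = -(1 / z) := by rw [div_neg]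
        rw [h1] at hd
        have h2 : Complex.I * (b:ℂ) * (-z) = -(Complex.I * b * z) := by ring
        rw [h2, neg_neg] at hd
        linear_combination -hd)
      hint'
    have hcn : (∫ x : ℝ, f x * Complex.exp (-(Complex.I * ξ * x)))
        = ∫ x : ℝ, f (-(x:ℂ)) * Complex.exp (-(Complex.I * ((-ξ : ℝ) : ℂ) * x)) := by
      rw [← integral_neg_eq_self (fun x : ℝ => f x * Complex.exp (-(Complex.I * ξ * x))) volume]
      congr 1
      funext x
      show f ((-x : ℝ) : ℂ) * Complex.exp (-(Complex.I * ξ * ((-x : ℝ) : ℂ)))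
        = f (-(x : ℂ)) * Complex.exp (-(Complex.I * ((-ξ : ℝ) : ℂ) * (x : ℂ)))
      push_cast
      ring_nf
    rw [hcn]
    exact key'
end

section
/- Let F be an entire function with F(0) = 0 and let λ > 0. Let γ₊ be the contour consisting of the real ray from -∞ to -1, the upper unit semicircle from -1 to 1, and the real ray from 1 to ∞. Then ∫_{γ₊} e^{iλz} F(1/z) dz = 0, where the improper integral is understood as the limit over symmetric truncations [-R, R]. -/
open Complex Filter intervalIntegral Set

private lemma stmt18_exp_int (a b : ℝ) (ha : 0 < a) :
    ∫ x in (0:ℝ)..b, Real.exp (-(a * x)) ≤ 1 / a := by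
  have h : ∀ x ∈ Set.uIcc (0:ℝ) b, HasDerivAt (fun x => -Real.exp (-(a * x)) / a)
      (Real.exp (-(a * x))) x := by
    intro x _
    have h1 : HasDerivAt (fun x : ℝ => -(a * x)) (-a) x := by
      simpa using ((hasDerivAt_id x).const_mul a).fun_neg
    have h2 := (Real.hasDerivAt_exp (-(a * x))).comp x h1
    have h3 := (h2.fun_neg).div_const a
    refine h3.congr_deriv ?_
    rw [mul_neg, neg_neg, mul_div_assoc, div_self ha.ne', mul_one]
  rw [intervalIntegral.integral_eq_sub_of_hasDerivAt h
    ((Real.continuous_exp.comp (by continuity)).intervalIntegrable 0 b)]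
  have h1 := Real.exp_pos (-(a * b))
  have h2 : Real.exp (-(a * 0)) = 1 := by simp
  rw [h2, div_sub_div_same, div_le_div_iff_of_pos_right ha]
  linarith

private lemma stmt18_jordan (c : ℝ) (hc : 0 < c) :
    ∫ x in (0:ℝ)..Real.pi, Real.exp (-(c * Real.sin x)) ≤ Real.pi / c := by
  set a := 2 * c / Real.pi with ha_def
  have hπ := Real.pi_pos
  have ha : 0 < a := by positivity
  have key : ∀ x ∈ Set.Icc (0:ℝ) Real.pi,
      Real.exp (-(c * Real.sin x)) ≤ Real.exp (-(a * x)) + Real.exp (-(a * (Real.pi - x))) := by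
    intro x ⟨hx0, hxπ⟩
    rcases le_or_gt x (Real.pi / 2) with h | h
    · have hsin : a * x ≤ c * Real.sin x := by
        have := Real.mul_le_sin hx0 h
        calc a * x = c * (2 / Real.pi * x) := by rw [ha_def]; ring
        _ ≤ c * Real.sin x := by nlinarith
      have := Real.exp_pos (-(a * (Real.pi - x)))
      have h2 : Real.exp (-(c * Real.sin x)) ≤ Real.exp (-(a * x)) :=
        Real.exp_le_exp.2 (by linarith)
      linarith
    · have h0 : (0:ℝ) ≤ Real.pi - x := by linarith
      have h1 : Real.pi - x ≤ Real.pi / 2 := by linarith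
      have hsin : a * (Real.pi - x) ≤ c * Real.sin x := by
        have := Real.mul_le_sin h0 h1
        rw [Real.sin_pi_sub] at this
        calc a * (Real.pi - x) = c * (2 / Real.pi * (Real.pi - x)) := by rw [ha_def]; ring
        _ ≤ c * Real.sin x := by nlinarith
      have := Real.exp_pos (-(a * x))
      have h2 : Real.exp (-(c * Real.sin x)) ≤ Real.exp (-(a * (Real.pi - x))) :=
        Real.exp_le_exp.2 (by linarith)
      linarith
  have int1 : IntervalIntegrable (fun x => Real.exp (-(c * Real.sin x)))
      MeasureTheory.volume 0 Real.pi :=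
    (Real.continuous_exp.comp (by continuity)).intervalIntegrable _ _
  have int2 : IntervalIntegrable (fun x => Real.exp (-(a * x)) + Real.exp (-(a * (Real.pi - x))))
      MeasureTheory.volume 0 Real.pi :=
    ((Real.continuous_exp.comp (by continuity)).add
      (Real.continuous_exp.comp (by continuity))).intervalIntegrable _ _
  have hmono := intervalIntegral.integral_mono_on hπ.le int1 int2 key
  have e2 : ∫ x in (0:ℝ)..Real.pi, (Real.exp (-(a * x)) + Real.exp (-(a * (Real.pi - x))))
      = (∫ x in (0:ℝ)..Real.pi, Real.exp (-(a * x)))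
        + ∫ x in (0:ℝ)..Real.pi, Real.exp (-(a * (Real.pi - x))) :=
    intervalIntegral.integral_add
      ((Real.continuous_exp.comp (by continuity)).intervalIntegrable _ _)
      ((Real.continuous_exp.comp (by continuity)).intervalIntegrable _ _)
  have e3 : (∫ x in (0:ℝ)..Real.pi, Real.exp (-(a * (Real.pi - x))))
      = ∫ x in (0:ℝ)..Real.pi, Real.exp (-(a * x)) := by
    have := intervalIntegral.integral_comp_sub_left (a := (0:ℝ)) (b := Real.pi)
      (fun x => Real.exp (-(a * x))) Real.pi
    simpa using this
  have e4 := stmt18_exp_int a Real.pi ha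
  have e5 : Real.pi / c = 2 * (1 / a) := by rw [ha_def]; field_simp
  rw [e5]
  rw [e2, e3] at hmono
  linarith

/-- For `F` entire with `F(0) = 0` and `λ > 0`, the contour integral
`∫_{γ₊} e^{iλz} F(1/z) dz` vanishes, where `γ₊` runs from `-∞` to `-1`, over the upper
unit semicircle to `1`, then to `+∞`; the improper integral is the limit over
symmetric truncations `[-R, R]`. -/
theorem stmt18 (F : ℂ → ℂ) (hF : Differentiable ℂ F) (hF0 : F 0 = 0)
    (l : ℝ) (hl : 0 < l) :
    Tendsto (fun R : ℝ =>
        (∫ x : ℝ in (-R)..(-1), Complex.exp (Complex.I * l * x) * F (1 / (x : ℂ))) +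
        (∫ θ : ℝ in Real.pi..0,
          Complex.exp (Complex.I * l * Complex.exp (Complex.I * θ)) *
            F (Complex.exp (-(Complex.I * θ))) *
            (Complex.I * Complex.exp (Complex.I * θ))) +
        ∫ x : ℝ in (1 : ℝ)..R, Complex.exp (Complex.I * l * x) * F (1 / (x : ℂ)))
      atTop (nhds 0) := by
  have hπ := Real.pi_pos
  set H : ℂ → ℂ := fun w => Complex.exp (Complex.I * l * Complex.exp (Complex.I * w)) *
      F (Complex.exp (-(Complex.I * w))) * (Complex.I * Complex.exp (Complex.I * w)) with hH
  set g : ℝ → ℂ := fun x => Complex.exp (Complex.I * l * x) * F (1 / (x : ℂ)) with hg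
  have hHdiff : Differentiable ℂ H := by
    apply Differentiable.mul
    apply Differentiable.mul
    · exact (Complex.differentiable_exp.comp
        ((differentiable_const _).mul (Complex.differentiable_exp.comp
          ((differentiable_const _).mul differentiable_id))))
    · exact hF.comp (Complex.differentiable_exp.comp
        (((differentiable_const (c := Complex.I)).mul differentiable_id).neg))
    · exact (differentiable_const _).mul (Complex.differentiable_exp.comp
        ((differentiable_const _).mul differentiable_id))
  have hHcont : Continuous H := hHdiff.continuous
  have hgcont : ContinuousOn g {x : ℝ | x ≠ 0} := by
    rw [hg]
    apply ContinuousOn.mul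
    · exact (Complex.continuous_exp.comp (by continuity)).continuousOn
    · exact hF.continuous.comp_continuousOn
        (continuousOn_const.div Complex.continuous_ofReal.continuousOn
          fun x hx => Complex.ofReal_ne_zero.2 hx)
  -- Cauchy on the rectangle [0, π] × [-T, 0]
  have cauchy : ∀ T : ℝ,
      (∫ x : ℝ in (0:ℝ)..Real.pi, H (x + (-T) * I)) -
        (∫ x : ℝ in (0:ℝ)..Real.pi, H (x + 0 * I)) +
        I • (∫ y : ℝ in (-T)..(0:ℝ), H (Real.pi + y * I)) -
        I • (∫ y : ℝ in (-T)..(0:ℝ), H (0 + y * I)) = 0 := by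
    intro T
    have := Complex.integral_boundary_rect_eq_zero_of_differentiableOn H
      ((-T) * I) (Real.pi + 0 * I) (hHdiff.differentiableOn)
    simpa using this
  have cauchy' : ∀ T : ℝ,
      (∫ x : ℝ in (0:ℝ)..Real.pi, H (x + (-T) * I)) -
        (∫ x : ℝ in (0:ℝ)..Real.pi, H x) +
        I * (∫ y : ℝ in (-T)..(0:ℝ), H (Real.pi + y * I)) -
        I * (∫ y : ℝ in (-T)..(0:ℝ), H (y * I)) = 0 := by
    intro T
    have := cauchy T
    simp only [zero_add, zero_mul, add_zero, smul_eq_mul] at this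
    exact this
  -- the key contour identity for R ≥ 1
  have key : ∀ R : ℝ, 1 ≤ R →
      ((∫ x : ℝ in (-R)..(-1), g x) + (∫ θ : ℝ in Real.pi..0, H θ) +
        ∫ x : ℝ in (1 : ℝ)..R, g x)
      = -(∫ x : ℝ in (0:ℝ)..Real.pi, H (x + (-(Real.log R)) * I)) := by
    intro R hR
    have hR0 : (0:ℝ) < R := lt_of_lt_of_le one_pos hR
    set T := Real.log R with hT
    have hexpT : Real.exp T = R := Real.exp_log hR0
    -- piece 3
    have h3a : (∫ x : ℝ in (1:ℝ)..R, g x) = ∫ s in (0:ℝ)..T, Real.exp s • g (Real.exp s) := by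
      have hsub := intervalIntegral.integral_comp_smul_deriv'' (f := Real.exp)
        (f' := Real.exp) (g := g) (a := 0) (b := T)
        Real.continuous_exp.continuousOn
        (fun x _ => (Real.hasDerivAt_exp x).hasDerivWithinAt)
        Real.continuous_exp.continuousOn
        (hgcont.mono (by rintro y ⟨s, _, rfl⟩; exact (Real.exp_pos s).ne'))
      rw [Real.exp_zero, hexpT] at hsub
      simp only [Function.comp] at hsub
      exact hsub.symm
    have h3b : ∀ s : ℝ, Real.exp s • g (Real.exp s) = -(Complex.I * H (((-s : ℝ) : ℂ) * I)) := by
      intro s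
      have e1 : Complex.I * (((-s : ℝ) : ℂ) * Complex.I) = ((s : ℝ) : ℂ) := by
        push_cast
        linear_combination (-(s:ℂ)) * Complex.I_sq
      rw [hH, hg]
      simp only [e1]
      rw [Complex.real_smul, Complex.ofReal_exp, one_div, ← Complex.exp_neg]
      linear_combination (Complex.exp (s:ℂ) *
        (Complex.exp (Complex.I * l * Complex.exp (s:ℂ)) * F (Complex.exp (-(s:ℂ))))) *
        Complex.I_sq
    have h3 : (∫ x : ℝ in (1:ℝ)..R, g x)
        = -(I * (∫ y : ℝ in (-T)..(0:ℝ), H (y * I))) := by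
      calc (∫ x : ℝ in (1:ℝ)..R, g x)
          = ∫ s in (0:ℝ)..T, Real.exp s • g (Real.exp s) := h3a
        _ = ∫ s in (0:ℝ)..T, -(Complex.I * H (((-s : ℝ) : ℂ) * I)) :=
            intervalIntegral.integral_congr fun s _ => h3b s
        _ = -(I * ∫ s in (0:ℝ)..T, H (((-s : ℝ) : ℂ) * I)) := by
            rw [intervalIntegral.integral_neg, intervalIntegral.integral_const_mul]
        _ = -(I * (∫ y : ℝ in (-T)..(0:ℝ), H (y * I))) := by
            have := intervalIntegral.integral_comp_neg (a := (0:ℝ)) (b := T)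
              (fun y : ℝ => H ((y : ℂ) * I))
            rw [neg_zero] at this
            rw [this]
    -- piece 1
    have h1a : (∫ x : ℝ in (-R)..(-1:ℝ), g x)
        = ∫ s in T..(0:ℝ), -(Real.exp s • g (-Real.exp s)) := by
      have hsub := intervalIntegral.integral_comp_smul_deriv'' (f := fun s => -Real.exp s)
        (f' := fun s => -Real.exp s) (g := g) (a := T) (b := 0)
        Real.continuous_exp.neg.continuousOn
        (fun x _ => ((Real.hasDerivAt_exp x).neg).hasDerivWithinAt)
        Real.continuous_exp.neg.continuousOn
        (hgcont.mono (by rintro y ⟨s, _, rfl⟩; exact neg_ne_zero.2 (Real.exp_pos s).ne'))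
      have hsub' : (∫ x in T..(0:ℝ), -(Real.exp x • g (-Real.exp x)))
          = ∫ u in (-R)..(-1:ℝ), g u := by
        simpa [Function.comp, hexpT, neg_smul] using hsub
      exact hsub'.symm
    have h1b : ∀ s : ℝ, -(Real.exp s • g (-Real.exp s))
        = -(Complex.I * H ((Real.pi : ℂ) + ((-s : ℝ) : ℂ) * I)) := by
      intro s
      apply neg_inj.mpr
      have e2 : Complex.I * ((Real.pi : ℂ) + ((-s : ℝ) : ℂ) * Complex.I)
          = (s:ℂ) + (Real.pi:ℂ) * Complex.I := by
        push_cast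
        linear_combination (-(s:ℂ)) * Complex.I_sq
      rw [hH, hg]
      simp only [e2]
      rw [Complex.exp_add, Complex.exp_pi_mul_I]
      rw [show -((s:ℂ) + (Real.pi:ℂ) * Complex.I) = -(s:ℂ) + -((Real.pi:ℂ) * Complex.I) by ring,
        Complex.exp_add]
      have e3 : Complex.exp (-((Real.pi:ℂ) * Complex.I)) = -1 := by
        rw [Complex.exp_neg, Complex.exp_pi_mul_I]; norm_num
      rw [e3, Complex.real_smul]
      push_cast
      rw [one_div, inv_neg, ← Complex.exp_neg]
      simp only [mul_neg_one]
      linear_combination (Complex.exp (s:ℂ) *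
        (Complex.exp (Complex.I * l * -Complex.exp (s:ℂ)) * F (-Complex.exp (-(s:ℂ))))) *
        Complex.I_sq
    have h1 : (∫ x : ℝ in (-R)..(-1:ℝ), g x)
        = I * (∫ y : ℝ in (-T)..(0:ℝ), H (Real.pi + y * I)) := by
      calc (∫ x : ℝ in (-R)..(-1:ℝ), g x)
          = ∫ s in T..(0:ℝ), -(Real.exp s • g (-Real.exp s)) := h1a
        _ = ∫ s in T..(0:ℝ), -(Complex.I * H ((Real.pi : ℂ) + ((-s : ℝ) : ℂ) * I)) :=
            intervalIntegral.integral_congr fun s _ => h1b s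
        _ = ∫ s in (0:ℝ)..T, Complex.I * H ((Real.pi : ℂ) + ((-s : ℝ) : ℂ) * I) := by
            rw [intervalIntegral.integral_symm]
            rw [intervalIntegral.integral_neg, neg_neg]
        _ = I * ∫ s in (0:ℝ)..T, H ((Real.pi : ℂ) + ((-s : ℝ) : ℂ) * I) :=
            intervalIntegral.integral_const_mul _ _
        _ = I * (∫ y : ℝ in (-T)..(0:ℝ), H (Real.pi + y * I)) := by
            have := intervalIntegral.integral_comp_neg (a := (0:ℝ)) (b := T)
              (fun y : ℝ => H ((Real.pi : ℂ) + (y : ℂ) * I))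
            rw [neg_zero] at this
            rw [this]
    -- piece 2
    have h2 : (∫ θ : ℝ in Real.pi..0, H θ) = -(∫ x : ℝ in (0:ℝ)..Real.pi, H x) :=
      intervalIntegral.integral_symm 0 Real.pi
    rw [h1, h2, h3]
    linear_combination cauchy' T
  -- bound via dslope
  have hGc : Continuous (dslope F 0) := by
    rw [continuous_iff_continuousAt]
    intro z
    rcases eq_or_ne z 0 with rfl | hz
    · exact continuousAt_dslope_same.2 hF.differentiableAt
    · exact (continuousAt_dslope_of_ne hz).2 hF.continuous.continuousAt
  obtain ⟨M, hM⟩ := (isCompact_closedBall (0:ℂ) 1).exists_bound_of_continuousOn hGc.continuousOn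
  have hM0 : 0 ≤ M := le_trans (norm_nonneg _) (hM 0 (Metric.mem_closedBall_self zero_le_one))
  have hFle : ∀ w : ℂ, ‖w‖ ≤ 1 → ‖F w‖ ≤ M * ‖w‖ := by
    intro w hw
    have h1 := sub_smul_dslope F 0 w
    rw [sub_zero, hF0, sub_zero] at h1
    calc ‖F w‖ = ‖w • dslope F 0 w‖ := by rw [h1]
      _ = ‖w‖ * ‖dslope F 0 w‖ := norm_smul _ _
      _ ≤ ‖w‖ * M :=
          mul_le_mul_of_nonneg_left (hM w (mem_closedBall_zero_iff.2 hw)) (norm_nonneg w)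
      _ = M * ‖w‖ := mul_comm _ _
  -- pointwise bound on the lower edge
  have hpt : ∀ R : ℝ, 1 ≤ R → ∀ x : ℝ, x ∈ Set.Icc (0:ℝ) Real.pi →
      ‖H (x + (-(Real.log R)) * I)‖ ≤ M * Real.exp (-(l * R * Real.sin x)) := by
    intro R hR x _
    have hR0 : (0:ℝ) < R := lt_of_lt_of_le one_pos hR
    set T := Real.log R with hT
    have hT0 : 0 ≤ T := Real.log_nonneg hR
    have hexpT : Real.exp T = R := Real.exp_log hR0
    have e : Complex.I * ((x:ℂ) + -(T:ℂ) * Complex.I) = (T:ℂ) + (x:ℂ) * Complex.I := by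
      linear_combination (-(T:ℂ)) * Complex.I_sq
    rw [hH]
    simp only [e]
    rw [Complex.exp_add,
      show Complex.exp (T:ℂ) = (R:ℂ) by rw [← Complex.ofReal_exp, hexpT]]
    rw [norm_mul, norm_mul]
    have hn3 : ‖Complex.I * ((R:ℂ) * Complex.exp ((x:ℂ) * I))‖ = R := by
      rw [norm_mul, norm_mul,
        Complex.norm_I, Complex.norm_real, Complex.norm_exp_ofReal_mul_I, Real.norm_eq_abs, abs_of_pos hR0]
      ring
    have hn1 : ‖Complex.exp (Complex.I * l * ((R:ℂ) * Complex.exp ((x:ℂ) * I)))‖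
        = Real.exp (-(l * R * Real.sin x)) := by
      rw [Complex.norm_exp]
      congr 1
      simp [Complex.mul_re, Complex.mul_im, Complex.exp_ofReal_mul_I_re,
        Complex.exp_ofReal_mul_I_im]
      ring
    have hn2 : ‖F (Complex.exp (-((T:ℂ) + (x:ℂ) * I)))‖ ≤ M * R⁻¹ := by
      have hnorm : ‖Complex.exp (-((T:ℂ) + (x:ℂ) * I))‖ = R⁻¹ := by
        rw [Complex.norm_exp]
        have : (-((T:ℂ) + (x:ℂ) * I)).re = -T := by simp
        rw [this, Real.exp_neg, hexpT]
      have hle1 : ‖Complex.exp (-((T:ℂ) + (x:ℂ) * I))‖ ≤ 1 := by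
        rw [hnorm]
        exact inv_le_one_of_one_le₀ hR
      calc ‖F (Complex.exp (-((T:ℂ) + (x:ℂ) * I)))‖
          ≤ M * ‖Complex.exp (-((T:ℂ) + (x:ℂ) * I))‖ := hFle _ hle1
        _ = M * R⁻¹ := by rw [hnorm]
    calc ‖Complex.exp (Complex.I * l * ((R:ℂ) * Complex.exp ((x:ℂ) * I)))‖ *
          ‖F (Complex.exp (-((T:ℂ) + (x:ℂ) * I)))‖ *
          ‖Complex.I * ((R:ℂ) * Complex.exp ((x:ℂ) * I))‖
        ≤ Real.exp (-(l * R * Real.sin x)) * (M * R⁻¹) * R := by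
          rw [hn1, hn3]
          exact mul_le_mul_of_nonneg_right
            (mul_le_mul_of_nonneg_left hn2 (Real.exp_pos _).le) hR0.le
      _ = M * Real.exp (-(l * R * Real.sin x)) := by
          field_simp
  -- final bound
  have bound : ∀ R : ℝ, 1 ≤ R →
      ‖∫ x : ℝ in (0:ℝ)..Real.pi, H (x + (-(Real.log R)) * I)‖ ≤ M * Real.pi / l * R⁻¹ := by
    intro R hR
    have hR0 : (0:ℝ) < R := lt_of_lt_of_le one_pos hR
    have hlR : 0 < l * R := mul_pos hl hR0
    have int1 : IntervalIntegrable (fun x : ℝ => ‖H (x + (-(Real.log R)) * I)‖)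
        MeasureTheory.volume 0 Real.pi :=
      (((hHcont.comp (Complex.continuous_ofReal.add continuous_const)).norm).intervalIntegrable _ _)
    have int2 : IntervalIntegrable (fun x : ℝ => M * Real.exp (-(l * R * Real.sin x)))
        MeasureTheory.volume 0 Real.pi :=
      ((continuous_const.mul (Real.continuous_exp.comp
        ((continuous_const.mul Real.continuous_sin).neg))).intervalIntegrable _ _)
    calc ‖∫ x : ℝ in (0:ℝ)..Real.pi, H (x + (-(Real.log R)) * I)‖
        ≤ ∫ x : ℝ in (0:ℝ)..Real.pi, ‖H (x + (-(Real.log R)) * I)‖ :=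
          intervalIntegral.norm_integral_le_integral_norm hπ.le
      _ ≤ ∫ x : ℝ in (0:ℝ)..Real.pi, M * Real.exp (-(l * R * Real.sin x)) :=
          intervalIntegral.integral_mono_on hπ.le int1 int2 (hpt R hR)
      _ = M * ∫ x : ℝ in (0:ℝ)..Real.pi, Real.exp (-(l * R * Real.sin x)) :=
          intervalIntegral.integral_const_mul _ _
      _ ≤ M * (Real.pi / (l * R)) :=
          mul_le_mul_of_nonneg_left (stmt18_jordan (l * R) hlR) hM0
      _ = M * Real.pi / l * R⁻¹ := by
          field_simp
  -- conclude
  apply squeeze_zero_norm' (a := fun R : ℝ => M * Real.pi / l * R⁻¹)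
  · filter_upwards [eventually_ge_atTop (1:ℝ)] with R hR
    rw [key R hR, norm_neg]
    exact bound R hR
  · have := tendsto_inv_atTop_zero.const_mul (M * Real.pi / l)
    simpa using this
end
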